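/- arXiv:1706.00217 — 9 statements merged into one kernel-verified Lean document; each statement's English description precedes it below -/
import Mathlib

section
/- Let Λ ≠ 0 and let z be an infinitely differentiable real-valued function on ℝ with L^{2n}(Λ)z = 0 on [−1,1]. Then there exist an infinitely differentiable function R satisfying R^{(2p)} = (−1)^p Λ R on [−1,1] and a real polynomial P of degree at most 2n−2p−1 such that z = R + P on [−1,1]. If moreover z is even (z(−x) = z(x)), then R can be chosen even and P of degree at most 2n−2p−2. -/
noncomputable section

/-- The operator `L^{2k}(Λ) z = (−1)^k z^{(2k)} − Λ (−1)^{k−p} z^{(2k−2p)}`. -/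
def Lop (p k : ℕ) (Λ : ℝ) (z : ℝ → ℝ) : ℝ → ℝ := fun x =>
  (-1 : ℝ) ^ k * iteratedDeriv (2 * k) z x
    - Λ * (-1 : ℝ) ^ (k - p) * iteratedDeriv (2 * k - 2 * p) z x

namespace Stmt2Aux

open Set Filter

lemma deriv_top {f : ℝ → ℝ} (hf : ContDiff ℝ (⊤ : ℕ∞) f) : ContDiff ℝ (⊤ : ℕ∞) (deriv f) := by
  have h : ContDiff ℝ (((⊤ : ℕ∞) : WithTop ℕ∞) + 1) f := by exact hf.of_le (by exact_mod_cast le_top)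
  exact (contDiff_succ_iff_deriv.mp h).2.2

lemma itd_top {f : ℝ → ℝ} (hf : ContDiff ℝ (⊤ : ℕ∞) f) (k : ℕ) :
    ContDiff ℝ (⊤ : ℕ∞) (iteratedDeriv k f) := by
  induction k with
  | zero => simpa [iteratedDeriv_zero] using hf
  | succ k ih => rw [iteratedDeriv_succ]; exact deriv_top ih

lemma itd_add (j k : ℕ) (f : ℝ → ℝ) :
    iteratedDeriv (j + k) f = iteratedDeriv j (iteratedDeriv k f) := by
  rw [iteratedDeriv_eq_iterate, iteratedDeriv_eq_iterate, iteratedDeriv_eq_iterate,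
    Function.iterate_add_apply]

lemma itd_cmul {f : ℝ → ℝ} (hf : ContDiff ℝ (⊤ : ℕ∞) f) (c : ℝ) (k : ℕ) (x : ℝ) :
    iteratedDeriv k (fun y => c * f y) x = c * iteratedDeriv k f x := by
  simp only [← iteratedDerivWithin_univ]
  exact iteratedDerivWithin_const_mul (Set.mem_univ x) uniqueDiffOn_univ c
    (hf.of_le (by exact_mod_cast le_top)).contDiffWithinAt

lemma itd_sub {f g : ℝ → ℝ} (hf : ContDiff ℝ (⊤ : ℕ∞) f) (hg : ContDiff ℝ (⊤ : ℕ∞) g) (k : ℕ) (x : ℝ) :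
    iteratedDeriv k (fun y => f y - g y) x = iteratedDeriv k f x - iteratedDeriv k g x := by
  simp only [← iteratedDerivWithin_univ]
  exact iteratedDerivWithin_sub (Set.mem_univ x) uniqueDiffOn_univ
    (hf.of_le (by exact_mod_cast le_top)).contDiffWithinAt (hg.of_le (by exact_mod_cast le_top)).contDiffWithinAt

lemma eqon_deriv {f g : ℝ → ℝ} (hf : ContDiff ℝ (⊤ : ℕ∞) f) (hg : ContDiff ℝ (⊤ : ℕ∞) g)
    (h : Set.EqOn f g (Set.Icc (-1:ℝ) 1)) :
    Set.EqOn (deriv f) (deriv g) (Set.Icc (-1:ℝ) 1) := by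
  have h1 : Set.EqOn (deriv f) (deriv g) (Set.Ioo (-1:ℝ) 1) := by
    intro x hx
    have hfg : f =ᶠ[nhds x] g :=
      Filter.eventuallyEq_of_mem (isOpen_Ioo.mem_nhds hx)
        (fun y hy => h (Set.Ioo_subset_Icc_self hy))
    exact hfg.deriv_eq
  have h2 := h1.closure (hf.continuous_deriv (by simp)) (hg.continuous_deriv (by simp))
  rw [closure_Ioo (show (-1:ℝ) ≠ 1 by norm_num)] at h2
  exact h2

lemma eqon_itd {f g : ℝ → ℝ} (k : ℕ) (hf : ContDiff ℝ (⊤ : ℕ∞) f) (hg : ContDiff ℝ (⊤ : ℕ∞) g)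
    (h : Set.EqOn f g (Set.Icc (-1:ℝ) 1)) :
    Set.EqOn (iteratedDeriv k f) (iteratedDeriv k g) (Set.Icc (-1:ℝ) 1) := by
  induction k with
  | zero => simpa [iteratedDeriv_zero] using h
  | succ k ih =>
    rw [iteratedDeriv_succ, iteratedDeriv_succ]
    exact eqon_deriv (itd_top hf k) (itd_top hg k) ih

/-- Taylor expansion on `[-1,1]` for a function whose `k`-th derivative vanishes there. -/
lemma poly_rep : ∀ (k : ℕ) (g : ℝ → ℝ), ContDiff ℝ (⊤ : ℕ∞) g →
    (∀ x ∈ Set.Icc (-1:ℝ) 1, iteratedDeriv k g x = 0) →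
    ∀ x ∈ Set.Icc (-1:ℝ) 1,
      g x = ∑ i ∈ Finset.range k, iteratedDeriv i g 0 / (Nat.factorial i) * x ^ i := by
  intro k
  induction k with
  | zero =>
    intro g hg h0 x hx
    simpa [iteratedDeriv_zero] using h0 x hx
  | succ k IH =>
    intro g hg h0 x hx
    have hdg : ContDiff ℝ (⊤ : ℕ∞) (deriv g) := deriv_top hg
    have hk : ∀ y ∈ Set.Icc (-1:ℝ) 1, iteratedDeriv k (deriv g) y = 0 := by
      intro y hy
      rw [← iteratedDeriv_succ']
      exact h0 y hy
    have hrep := IH (deriv g) hdg hk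
    set h : ℝ → ℝ := fun y =>
      g y - ∑ i ∈ Finset.range (k+1), iteratedDeriv i g 0 / (Nat.factorial i) * y ^ i with hdef
    have hasD : ∀ y : ℝ, HasDerivAt h
        (deriv g y - ∑ i ∈ Finset.range k,
          iteratedDeriv i (deriv g) 0 / (Nat.factorial i) * y ^ i) y := by
      intro y
      have hg' : HasDerivAt g (deriv g y) y :=
        ((hg.differentiable (by simp)) y).hasDerivAt
      have hsum : HasDerivAt
          (fun t => ∑ i ∈ Finset.range (k+1),
            iteratedDeriv i g 0 / (Nat.factorial i) * t ^ i)
          (∑ i ∈ Finset.range (k+1),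
            iteratedDeriv i g 0 / (Nat.factorial i) * (↑i * y ^ (i - 1))) y := by
        apply HasDerivAt.fun_sum
        intro i _
        exact (hasDerivAt_pow i y).const_mul _
      have heq : (∑ i ∈ Finset.range (k+1),
            iteratedDeriv i g 0 / (Nat.factorial i) * (↑i * y ^ (i - 1)))
          = ∑ i ∈ Finset.range k,
            iteratedDeriv i (deriv g) 0 / (Nat.factorial i) * y ^ i := by
        rw [Finset.sum_range_succ']
        simp only [Nat.cast_zero, zero_mul, mul_zero, add_zero]
        apply Finset.sum_congr rfl
        intro i _
        rw [iteratedDeriv_succ', Nat.factorial_succ]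
        have hi : ((Nat.factorial i : ℝ)) ≠ 0 := Nat.cast_ne_zero.mpr (Nat.factorial_ne_zero i)
        push_cast
        field_simp
      rw [← heq]
      exact hg'.sub hsum
    have hder0 : ∀ y ∈ Set.Icc (-1:ℝ) 1, HasDerivAt h 0 y := by
      intro y hy
      have := hasD y
      rwa [hrep y hy, sub_self] at this
    have hdiff : DifferentiableOn ℝ h (Set.Icc (-1:ℝ) 1) := fun y _ =>
      ((hasD y).differentiableAt).differentiableWithinAt
    have hderivW : ∀ y ∈ Set.Ico (-1:ℝ) 1, derivWithin h (Set.Icc (-1:ℝ) 1) y = 0 := by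
      intro y hy
      have hy' : y ∈ Set.Icc (-1:ℝ) 1 := Set.Ico_subset_Icc_self hy
      exact ((hder0 y hy').hasDerivWithinAt).derivWithin
        ((uniqueDiffOn_Icc (show (-1:ℝ) < 1 by norm_num)) y hy')
    have hconst := constant_of_derivWithin_zero hdiff hderivW
    have h00 : h 0 = 0 := by
      have hz : (∑ i ∈ Finset.range (k+1),
          iteratedDeriv i g 0 / (Nat.factorial i) * (0:ℝ) ^ i) = g 0 := by
        rw [Finset.sum_range_succ']
        rw [Finset.sum_eq_zero (fun i _ => by simp [zero_pow (Nat.succ_ne_zero i)])]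
        simp
      simp [hdef, hz]
    have h0mem : (0:ℝ) ∈ Set.Icc (-1:ℝ) 1 := by constructor <;> norm_num
    have hx0 : h x = 0 := by
      rw [hconst x hx, ← hconst 0 h0mem, h00]
    have := hx0
    simp only [hdef] at this
    linarith [this]

lemma even_itd {f : ℝ → ℝ} (hf : ∀ x, f (-x) = f x) (k : ℕ) (x : ℝ) :
    iteratedDeriv k f (-x) = (-1:ℝ)^k * iteratedDeriv k f x := by
  have hfe : (fun y => f (-y)) = f := funext hf
  have h := iteratedDeriv_comp_neg k f x
  rw [hfe, smul_eq_mul] at h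
  have h1 : ((-1:ℝ))^k * (-1)^k = 1 := by
    rw [← pow_add, ← two_mul, pow_mul]; norm_num
  -- h : iteratedDeriv k f x = (-1)^k * iteratedDeriv k f (-x)
  linear_combination (-(-1:ℝ)^k) * h - iteratedDeriv k f (-x) * h1

end Stmt2Aux

open Stmt2Aux in
theorem stmt2 (p n : ℕ) (hp : 1 ≤ p) (hpn : p < n)
    (Λ : ℝ) (hΛ : Λ ≠ 0) (z : ℝ → ℝ) (hz : ContDiff ℝ (⊤ : ℕ∞) z)
    (hLz : ∀ x ∈ Set.Icc (-1:ℝ) 1, Lop p n Λ z x = 0) :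
    (∃ (R : ℝ → ℝ) (P : Polynomial ℝ), ContDiff ℝ (⊤ : ℕ∞) R ∧
        (∀ x ∈ Set.Icc (-1:ℝ) 1, iteratedDeriv (2 * p) R x = (-1:ℝ) ^ p * Λ * R x) ∧
        P.degree ≤ (2 * n - 2 * p - 1 : ℕ) ∧
        ∀ x ∈ Set.Icc (-1:ℝ) 1, z x = R x + P.eval x) ∧
    ((∀ x, z (-x) = z x) →
      ∃ (R : ℝ → ℝ) (P : Polynomial ℝ), ContDiff ℝ (⊤ : ℕ∞) R ∧
        (∀ x ∈ Set.Icc (-1:ℝ) 1, iteratedDeriv (2 * p) R x = (-1:ℝ) ^ p * Λ * R x) ∧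
        (∀ x, R (-x) = R x) ∧
        P.degree ≤ (2 * n - 2 * p - 2 : ℕ) ∧
        ∀ x ∈ Set.Icc (-1:ℝ) 1, z x = R x + P.eval x) := by
  set m : ℕ := n - p with hmdef
  have hm : 1 ≤ m := by omega
  set a : ℝ := (-1:ℝ)^p * Λ with hadef
  have ha : a ≠ 0 := mul_ne_zero (pow_ne_zero _ (by norm_num)) hΛ
  set w : ℝ → ℝ := iteratedDeriv (2*m) z with hwdef
  have hwC : ContDiff ℝ (⊤ : ℕ∞) w := itd_top hz _
  -- the eigen-equation for w on [-1,1]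
  have hw : ∀ x ∈ Set.Icc (-1:ℝ) 1, iteratedDeriv (2*p) w x = a * w x := by
    intro x hx
    have e := hLz x hx
    simp only [Lop] at e
    have h2np : 2*n - 2*p = 2*m := by omega
    rw [h2np] at e
    have hcomm : iteratedDeriv (2*p) w x = iteratedDeriv (2*n) z x := by
      rw [hwdef, ← itd_add]
      have : 2*p + 2*m = 2*n := by omega
      rw [this]
    rw [hcomm]
    have key : ((-1:ℝ))^(n-p) * (-1)^n = (-1)^p := by
      rw [← pow_add]
      have h2 : n - p + n = 2*(n-p) + p := by omega
      rw [h2, pow_add, pow_mul]; norm_num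
    have hsq : ((-1:ℝ))^n * (-1)^n = 1 := by
      rw [← pow_add, ← two_mul, pow_mul]; norm_num
    show iteratedDeriv (2*n) z x = (-1:ℝ)^p * Λ * w x
    linear_combination ((-1:ℝ))^n * e - iteratedDeriv (2*n) z x * hsq + Λ * w x * key
  -- shifted eigen-equation
  have hstep : ∀ j : ℕ, Set.EqOn (iteratedDeriv (j + 2*p) w)
      (fun x => a * iteratedDeriv j w x) (Set.Icc (-1:ℝ) 1) := by
    intro j
    have h2 := eqon_itd j (itd_top hwC (2*p)) (contDiff_const.mul hwC) hw
    intro x hx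
    have h3 := h2 hx
    rw [itd_add j (2*p) w]
    rw [h3, itd_cmul hwC a j x]
  -- iterated eigen-equation
  have hpow : ∀ t : ℕ, Set.EqOn (iteratedDeriv (2*p*t) w)
      (fun x => a^t * w x) (Set.Icc (-1:ℝ) 1) := by
    intro t
    induction t with
    | zero => intro x hx; simp
    | succ t ih =>
      intro x hx
      have h1 : 2*p*(t+1) = 2*p*t + 2*p := by ring
      rw [h1]
      have h2 := hstep (2*p*t) hx
      rw [h2]
      simp only
      rw [ih hx]
      show a * (a^t * w x) = a^(t+1) * w x
      ring
  set s : ℕ := 2*m*(p-1) with hsdef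
  set R : ℝ → ℝ := fun x => (a⁻¹)^m * iteratedDeriv s w x with hRdef
  have hRC : ContDiff ℝ (⊤ : ℕ∞) R := contDiff_const.mul (itd_top hwC s)
  have hReig : ∀ x ∈ Set.Icc (-1:ℝ) 1, iteratedDeriv (2*p) R x = a * R x := by
    intro x hx
    rw [hRdef]
    rw [itd_cmul (itd_top hwC s) _ (2*p) x]
    have h1 : iteratedDeriv (2*p) (iteratedDeriv s w) x = iteratedDeriv (s + 2*p) w x := by
      rw [← itd_add]
      have : 2*p + s = s + 2*p := by omega
      rw [this]
    rw [h1, hstep s hx]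
    show (a⁻¹)^m * (a * iteratedDeriv s w x) = a * ((a⁻¹)^m * iteratedDeriv s w x)
    ring
  have hR2m : ∀ x ∈ Set.Icc (-1:ℝ) 1, iteratedDeriv (2*m) R x = w x := by
    intro x hx
    rw [hRdef]
    rw [itd_cmul (itd_top hwC s) _ (2*m) x]
    have h1 : iteratedDeriv (2*m) (iteratedDeriv s w) x = iteratedDeriv (2*p*m) w x := by
      rw [← itd_add]
      have : 2*m + s = 2*p*m := by
        rw [hsdef]; cases p with
        | zero => omega
        | succ q => simp only [Nat.add_sub_cancel]; ring
      rw [this]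
    rw [h1, hpow m hx]
    show (a⁻¹)^m * (a^m * w x) = w x
    rw [inv_pow]
    exact inv_mul_cancel_left₀ (pow_ne_zero m ha) _
  set g : ℝ → ℝ := fun x => z x - R x with hgdef
  have hgC : ContDiff ℝ (⊤ : ℕ∞) g := hz.sub hRC
  have hgzero : ∀ x ∈ Set.Icc (-1:ℝ) 1, iteratedDeriv (2*m) g x = 0 := by
    intro x hx
    rw [hgdef, itd_sub hz hRC, hR2m x hx, hwdef]
    ring
  have hTay := poly_rep (2*m) g hgC hgzero
  -- the polynomial
  set c : ℕ → ℝ := fun i => iteratedDeriv i g 0 / (Nat.factorial i) with hcdef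
  have hPdeg : ∀ k : ℕ, (∑ i ∈ Finset.range k,
      Polynomial.C (c i) * Polynomial.X ^ i : Polynomial ℝ).degree ≤ (k - 1 : ℕ) := by
    intro k
    apply (Polynomial.degree_sum_le _ _).trans
    apply Finset.sup_le
    intro i hi
    apply (Polynomial.degree_C_mul_X_pow_le i (c i)).trans
    exact_mod_cast Nat.cast_le.mpr (by
      have := Finset.mem_range.mp hi; omega : i ≤ k - 1)
  have hPeval : ∀ (k : ℕ) (x : ℝ), (∑ i ∈ Finset.range k,
      Polynomial.C (c i) * Polynomial.X ^ i : Polynomial ℝ).eval x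
      = ∑ i ∈ Finset.range k, c i * x ^ i := by
    intro k x
    rw [Polynomial.eval_finset_sum]
    simp
  constructor
  · refine ⟨R, ∑ i ∈ Finset.range (2*m), Polynomial.C (c i) * Polynomial.X ^ i,
      hRC, hReig, ?_, ?_⟩
    · have := hPdeg (2*m)
      have hnum : 2*n - 2*p - 1 = 2*m - 1 := by omega
      rw [hnum]
      exact this
    · intro x hx
      rw [hPeval (2*m) x]
      have := hTay x hx
      simp only [hgdef] at this
      rw [hcdef]
      simp only
      linarith [this]
  · intro hze
    have hzEven : ∀ k x, iteratedDeriv k z (-x) = (-1:ℝ)^k * iteratedDeriv k z x :=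
      even_itd hze
    have hRE : ∀ x, R (-x) = R x := by
      intro x
      rw [hRdef]
      simp only
      have h1 : iteratedDeriv s w = iteratedDeriv (s + 2*m) z := by
        rw [hwdef, itd_add]
      rw [h1]
      rw [hzEven (s + 2*m) x]
      have h2 : ((-1:ℝ))^(s + 2*m) = 1 := by
        have : s + 2*m = 2*(m*(p-1) + m) := by rw [hsdef]; ring
        rw [this, pow_mul]; norm_num
      rw [h2, one_mul]
    have hgE : ∀ x, g (-x) = g x := by
      intro x
      rw [hgdef]
      simp only
      rw [hze x, hRE x]
    have hodd : iteratedDeriv (2*m - 1) g 0 = 0 := by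
      have h1 := even_itd hgE (2*m - 1) 0
      rw [neg_zero] at h1
      have h2 : ((-1:ℝ))^(2*m - 1) = -1 := Odd.neg_one_pow ⟨m - 1, by omega⟩
      rw [h2] at h1
      linarith
    refine ⟨R, ∑ i ∈ Finset.range (2*m - 1), Polynomial.C (c i) * Polynomial.X ^ i,
      hRC, hReig, hRE, ?_, ?_⟩
    · have := hPdeg (2*m - 1)
      have hnum : 2*n - 2*p - 2 = 2*m - 1 - 1 := by omega
      rw [hnum]
      exact this
    · intro x hx
      rw [hPeval (2*m - 1) x]
      have hT := hTay x hx
      have hsplit : (∑ i ∈ Finset.range (2*m),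
          iteratedDeriv i g 0 / (Nat.factorial i) * x ^ i)
          = ∑ i ∈ Finset.range (2*m - 1),
          iteratedDeriv i g 0 / (Nat.factorial i) * x ^ i := by
        have h2m : 2*m = (2*m - 1) + 1 := by omega
        rw [h2m, Finset.sum_range_succ, hodd]
        simp
      rw [hsplit] at hT
      simp only [hgdef] at hT
      rw [hcdef]
      simp only
      linarith [hT]
end
end

section
/- Let Λ > 0. There exists z ∈ Ω^n, not identically zero on [−1,1], odd (z(−x) = −z(x) for all x) and satisfying L^{2n}(Λ)z = 0 on [−1,1], if and only if there exists an even eigenfunction at level n+1 with eigenvalue Λ. -/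
noncomputable section

/-- `Omega k z`: `z` is infinitely differentiable on `ℝ` and
`z⁽ʲ⁾(−1) = z⁽ʲ⁾(1) = 0` for `j = 0, …, k−1`. -/
def Omega (k : ℕ) (z : ℝ → ℝ) : Prop :=
  ContDiff ℝ (⊤ : ℕ∞) z ∧ ∀ j < k, iteratedDeriv j z (-1) = 0 ∧ iteratedDeriv j z 1 = 0

/-- `z` is not identically zero on `[−1,1]`. -/
def NotIdZero (z : ℝ → ℝ) : Prop := ∃ x ∈ Set.Icc (-1:ℝ) 1, z x ≠ 0

/-- `z` is an even eigenfunction at level `k` with eigenvalue `Λ`. -/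
def EvenEig (p k : ℕ) (Λ : ℝ) (z : ℝ → ℝ) : Prop :=
  Omega k z ∧ NotIdZero z ∧ (∀ x, z (-x) = z x) ∧
    ∀ x ∈ Set.Icc (-1:ℝ) 1, Lop p k Λ z x = 0

open Set
open scoped ContDiff

namespace Stmt3Aux

lemma contDiff_top_deriv {f : ℝ → ℝ} (h : ContDiff ℝ (⊤ : ℕ∞) f) : ContDiff ℝ (⊤ : ℕ∞) (deriv f) :=
  (contDiff_succ_iff_deriv.mp (by simpa using h)).2.2

lemma contDiff_top_iteratedDeriv {f : ℝ → ℝ} (h : ContDiff ℝ (⊤ : ℕ∞) f) (k : ℕ) :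
    ContDiff ℝ (⊤ : ℕ∞) (iteratedDeriv k f) := by
  induction k with
  | zero => simpa [iteratedDeriv_zero] using h
  | succ k ih => rw [iteratedDeriv_succ]; exact contDiff_top_deriv ih

lemma diff_iteratedDeriv {f : ℝ → ℝ} (h : ContDiff ℝ (⊤ : ℕ∞) f) (k : ℕ) :
    Differentiable ℝ (iteratedDeriv k f) :=
  (contDiff_top_iteratedDeriv h k).differentiable (by simp)

lemma deriv_zero_on_Icc {f : ℝ → ℝ} (hf : Differentiable ℝ f)
    (h : ∀ x ∈ Icc (-1:ℝ) 1, f x = 0) : ∀ x ∈ Icc (-1:ℝ) 1, deriv f x = 0 := by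
  have hu : UniqueDiffOn ℝ (Icc (-1:ℝ) 1) := uniqueDiffOn_Icc (by norm_num)
  intro x hx
  have h1 : derivWithin f (Icc (-1:ℝ) 1) x = deriv f x := (hf x).derivWithin (hu x hx)
  have h2 : derivWithin f (Icc (-1:ℝ) 1) x = derivWithin (fun _ => (0:ℝ)) (Icc (-1:ℝ) 1) x :=
    derivWithin_congr h (h x hx)
  rw [derivWithin_fun_const, Pi.zero_apply] at h2
  rw [← h1, h2]

lemma const_on_Icc {f : ℝ → ℝ} (hf : Differentiable ℝ f)
    (h : ∀ x ∈ Icc (-1:ℝ) 1, deriv f x = 0) : ∀ x ∈ Icc (-1:ℝ) 1, f x = f (-1) :=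
  constant_of_has_deriv_right_zero hf.continuous.continuousOn
    (fun x hx => by
      have hd := (hf x).hasDerivAt
      rw [h x ⟨hx.1, hx.2.le⟩] at hd
      exact hd.hasDerivWithinAt)

lemma iteratedDeriv_odd_even {z : ℝ → ℝ} (hodd : ∀ x, z (-x) = -z x) {k : ℕ} (hk : Even k)
    (x : ℝ) : iteratedDeriv k z (-x) = - iteratedDeriv k z x := by
  have h1 : (fun y => z (-y)) = fun y => -(z y) := funext fun y => hodd y
  have h2 := iteratedDeriv_comp_neg k z x
  rw [h1, iteratedDeriv_fun_neg, hk.neg_one_pow] at h2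
  simpa using h2.symm

lemma diff_Lop (p k : ℕ) (Λ : ℝ) {z : ℝ → ℝ} (hz : ContDiff ℝ (⊤ : ℕ∞) z) :
    Differentiable ℝ (Lop p k Λ z) := by
  unfold Lop
  exact ((diff_iteratedDeriv hz _).const_mul _).sub ((diff_iteratedDeriv hz _).const_mul _)

lemma deriv_Lop (p k : ℕ) (Λ : ℝ) {z : ℝ → ℝ} (hz : ContDiff ℝ (⊤ : ℕ∞) z) (x : ℝ) :
    deriv (Lop p k Λ z) x
      = (-1:ℝ)^k * iteratedDeriv (2*k+1) z x
        - Λ * (-1:ℝ)^(k-p) * iteratedDeriv (2*k-2*p+1) z x := by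
  unfold Lop
  have d1 : DifferentiableAt ℝ (iteratedDeriv (2*k) z) x := diff_iteratedDeriv hz _ x
  have d2 : DifferentiableAt ℝ (iteratedDeriv (2*k-2*p) z) x := diff_iteratedDeriv hz _ x
  rw [deriv_fun_sub (d1.const_mul _) (d2.const_mul _), deriv_const_mul _ d1, deriv_const_mul _ d2,
    ← iteratedDeriv_succ, ← iteratedDeriv_succ]

end Stmt3Aux

open Stmt3Aux

theorem stmt3 (p n : ℕ) (hp : 1 ≤ p) (hpn : p < n) (Λ : ℝ) (hΛ : 0 < Λ) :
    (∃ z : ℝ → ℝ, Omega n z ∧ NotIdZero z ∧ (∀ x, z (-x) = -z x) ∧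
        ∀ x ∈ Set.Icc (-1:ℝ) 1, Lop p n Λ z x = 0) ↔
      (∃ w : ℝ → ℝ, EvenEig p (n + 1) Λ w) := by
  constructor
  · rintro ⟨z, ⟨hsm, hbc⟩, hnz, hodd, heq⟩
    -- the eigenvalue equation holds globally by the identity theorem
    have hF0 : ∀ x ∈ Icc (-1:ℝ) 1, Lop p n Λ z x = 0 := heq
    set c : ℝ := Λ * (-1:ℝ)^(n-p) * (-1)^n with hcdef
    have hc : c ≠ 0 := by
      have h1 : ((-1:ℝ))^(n-p) ≠ 0 := pow_ne_zero _ (by norm_num)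
      have h2 : ((-1:ℝ))^n ≠ 0 := pow_ne_zero _ (by norm_num)
      exact mul_ne_zero (mul_ne_zero (ne_of_gt hΛ) h1) h2
    have hsq : (-1:ℝ)^n * (-1)^n = 1 := by
      rw [← pow_add]
      exact Even.neg_one_pow ⟨n, rfl⟩
    have hODE : ∀ x ∈ Icc (-1:ℝ) 1, iteratedDeriv (2*n) z x = c * iteratedDeriv (2*n-2*p) z x := by
      intro x hx
      have h0 := hF0 x hx
      unfold Lop at h0
      have h2 : (-1:ℝ)^n * iteratedDeriv (2*n) z x
          = Λ * (-1:ℝ)^(n-p) * iteratedDeriv (2*n-2*p) z x := sub_eq_zero.mp h0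
      calc iteratedDeriv (2*n) z x
          = ((-1:ℝ)^n * (-1)^n) * iteratedDeriv (2*n) z x := by rw [hsq, one_mul]
        _ = (-1:ℝ)^n * (Λ * (-1:ℝ)^(n-p) * iteratedDeriv (2*n-2*p) z x) := by
            rw [mul_assoc, h2]
        _ = c * iteratedDeriv (2*n-2*p) z x := by rw [hcdef]; ring
    -- the primitive of z
    set w : ℝ → ℝ := fun x => ∫ t in (-1:ℝ)..x, z t with hwdef
    have hzc : Continuous z := hsm.continuous
    have hw' : ∀ x, HasDerivAt w (z x) x :=
      fun x => (hzc.integral_hasStrictDerivAt (-1) x).hasDerivAt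
    have hwd : Differentiable ℝ w := fun x => (hw' x).differentiableAt
    have derivw : deriv w = z := funext fun x => (hw' x).deriv
    have hwsm' : ContDiff ℝ ∞ w :=
      contDiff_infty_iff_deriv.mpr ⟨hwd, by rw [derivw]; exact hsm.of_le (by simp)⟩
    have hshift : ∀ j, iteratedDeriv (j+1) w = iteratedDeriv j z := by
      intro j
      rw [iteratedDeriv_succ', derivw]
    -- analyticity of w
    have hwsm : ContDiff ℝ (⊤ : ℕ∞) w := hwsm'
    -- evenness of w
    have hwev : ∀ x, w (-x) = w x := by
      have hdz : ∀ x, deriv (fun y => w (-y) - w y) x = 0 := by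
        intro x
        have h1 : HasDerivAt (fun y : ℝ => w (-y)) (z (-x) * (-1)) x :=
          (hw' (-x)).comp x (hasDerivAt_neg x)
        have h2 : HasDerivAt (fun y => w (-y) - w y) (z (-x) * (-1) - z x) x :=
          h1.sub (hw' x)
        rw [h2.deriv, hodd x]
        ring
      have hdiff : Differentiable ℝ (fun y => w (-y) - w y) := by
        intro x
        have h1 : HasDerivAt (fun y : ℝ => w (-y)) (z (-x) * (-1)) x :=
          (hw' (-x)).comp x (hasDerivAt_neg x)
        exact (h1.sub (hw' x)).differentiableAt
      intro x
      have hcx := is_const_of_deriv_eq_zero hdiff hdz x 0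
      simp at hcx
      linarith [hcx]
    have hw1 : w (-1) = 0 := by
      rw [hwdef]
      exact intervalIntegral.integral_same
    -- eigenvalue equation for w, globally
    have hLw : ∀ x ∈ Icc (-1:ℝ) 1, Lop p (n+1) Λ w x = 0 := by
      intro x hx
      have hder := deriv_Lop p n Λ hsm x
      have hzero : deriv (Lop p n Λ z) x = 0 :=
        deriv_zero_on_Icc (diff_Lop p n Λ hsm) hF0 x hx
      rw [hzero] at hder
      unfold Lop
      have e1 : 2*(n+1) = (2*n+1)+1 := by ring
      have e2 : 2*(n+1) - 2*p = (2*n-2*p+1)+1 := by omega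
      rw [e2, hshift (2*n-2*p+1), e1, hshift (2*n+1)]
      have e3 : (-1:ℝ)^(n+1) = -((-1:ℝ)^n) := by rw [pow_succ]; ring
      have e5 : (-1:ℝ)^(n+1-p) = -((-1:ℝ)^(n-p)) := by
        rw [show n+1-p = (n-p)+1 by omega, pow_succ]; ring
      rw [e3, e5]
      linear_combination hder
    have hwnz : NotIdZero w := by
      obtain ⟨x₀, hx₀, hzx₀⟩ := hnz
      by_contra hcon
      unfold NotIdZero at hcon
      push_neg at hcon
      have hd := deriv_zero_on_Icc hwd hcon x₀ hx₀
      rw [derivw] at hd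
      exact hzx₀ hd
    refine ⟨w, ⟨hwsm, ?_⟩, hwnz, hwev, fun x hx => hLw x hx⟩
    intro j hj
    cases j with
    | zero =>
      rw [iteratedDeriv_zero]
      exact ⟨hw1, (hwev 1).symm.trans hw1⟩
    | succ j =>
      rw [hshift j]
      exact hbc j (by omega)
  · rintro ⟨w, ⟨hsm, hbc⟩, hnz, heven, heq⟩
    set z : ℝ → ℝ := deriv w with hzdef
    have hzsm : ContDiff ℝ (⊤ : ℕ∞) z := contDiff_top_deriv hsm
    have hwd : Differentiable ℝ w := hsm.differentiable (by simp)
    have hshift : ∀ j, iteratedDeriv (j+1) w = iteratedDeriv j z := by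
      intro j
      rw [iteratedDeriv_succ', hzdef]
    have hodd : ∀ x, z (-x) = -z x := by
      intro x
      have h1 : deriv (fun y => w (-y)) x = -deriv w (-x) := deriv_comp_neg w x
      have h2 : (fun y => w (-y)) = w := funext heven
      rw [h2] at h1
      rw [hzdef]
      linarith [h1]
    have hzbc : ∀ j < n, iteratedDeriv j z (-1) = 0 ∧ iteratedDeriv j z 1 = 0 := by
      intro j hj
      rw [← hshift j]
      exact hbc (j+1) (by omega)
    have hwm1 : w (-1) = 0 := by
      have hb := (hbc 0 (by omega)).1
      rwa [iteratedDeriv_zero] at hb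
    have hznz : NotIdZero z := by
      by_contra hcon
      unfold NotIdZero at hcon
      push_neg at hcon
      obtain ⟨x₀, hx₀, hwx₀⟩ := hnz
      have hder : ∀ x ∈ Icc (-1:ℝ) 1, deriv w x = 0 := by
        intro x hx
        rw [← hzdef]
        exact hcon x hx
      have hcst := const_on_Icc hwd hder x₀ hx₀
      rw [hwm1] at hcst
      exact hwx₀ hcst
    have hF : ∀ x ∈ Icc (-1:ℝ) 1, Lop p n Λ z x = 0 := by
      have hFd : Differentiable ℝ (Lop p n Λ z) := diff_Lop p n Λ hzsm
      have hderiv0 : ∀ x ∈ Icc (-1:ℝ) 1, deriv (Lop p n Λ z) x = 0 := by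
        intro x hx
        rw [deriv_Lop p n Λ hzsm x]
        have hw0 := heq x hx
        unfold Lop at hw0
        have e1 : 2*(n+1) = (2*n+1)+1 := by ring
        have e2 : 2*(n+1) - 2*p = (2*n-2*p+1)+1 := by omega
        rw [e2, hshift (2*n-2*p+1), e1, hshift (2*n+1)] at hw0
        have e3 : (-1:ℝ)^(n+1) = -((-1:ℝ)^n) := by rw [pow_succ]; ring
        have e5 : (-1:ℝ)^(n+1-p) = -((-1:ℝ)^(n-p)) := by
          rw [show n+1-p = (n-p)+1 by omega, pow_succ]; ring
        rw [e3, e5] at hw0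
        linear_combination -hw0
      have hconst := const_on_Icc hFd hderiv0
      have hz0 : ∀ k : ℕ, Even k → iteratedDeriv k z 0 = 0 := by
        intro k hk
        have hpar := iteratedDeriv_odd_even hodd hk 0
        rw [neg_zero] at hpar
        linarith
      have hF00 : Lop p n Λ z 0 = 0 := by
        unfold Lop
        rw [hz0 (2*n) ⟨n, by ring⟩, hz0 (2*n-2*p) ⟨n-p, by omega⟩]
        ring
      intro x hx
      rw [hconst x hx, ← hconst 0 (by norm_num), hF00]
    exact ⟨z, ⟨hzsm, hzbc⟩, hznz, hodd, hF⟩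
end
end

section
/- If z is an even eigenfunction at level n with eigenvalue Λ, then the function L^{2(n−1)}(Λ)z is constant on [−1,1]. -/
noncomputable section

-- auxiliary: smoothness of iterated derivatives
lemma aux_smooth {z : ℝ → ℝ} (hz : ContDiff ℝ (⊤ : ℕ∞) z) (m : ℕ) :
    Differentiable ℝ (iteratedDeriv m z) := by
  exact hz.differentiable_iteratedDeriv m (by exact_mod_cast ENat.coe_lt_top m)

lemma aux_parity {z : ℝ → ℝ} (hev : ∀ x, z (-x) = z x) (m : ℕ) (a : ℝ) :
    iteratedDeriv m z (-a) = (-1:ℝ)^m * iteratedDeriv m z a := by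
  have h := iteratedDeriv_comp_neg m z a
  have hzz : (fun x => z (-x)) = z := funext hev
  rw [hzz] at h
  rw [h, smul_eq_mul, ← mul_assoc, ← mul_pow]
  norm_num

lemma aux_const {f : ℝ → ℝ} (hf : Differentiable ℝ f)
    (h : ∀ x ∈ Set.Icc (-1:ℝ) 1, deriv f x = 0) :
    ∀ x ∈ Set.Icc (-1:ℝ) 1, f x = f (-1) := by
  apply constant_of_derivWithin_zero (hf.differentiableOn)
  intro x hx
  rw [(hf x).derivWithin (uniqueDiffOn_Icc (by norm_num) x (Set.Ico_subset_Icc_self hx))]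
  exact h x (Set.Ico_subset_Icc_self hx)

theorem stmt4 (p n : ℕ) (hp : 1 ≤ p) (hpn : p < n)
    (Λ : ℝ) (z : ℝ → ℝ) (hz : EvenEig p n Λ z) :
    ∃ c : ℝ, ∀ x ∈ Set.Icc (-1:ℝ) 1, Lop p (n - 1) Λ z x = c := by
  obtain ⟨⟨hsm, -⟩, -, hev, heq⟩ := hz
  set k := n - 1 with hk
  have hn : n = k + 1 := by omega
  have hpk : p ≤ k := by omega
  set a : ℝ := (-1:ℝ)^k
  set b : ℝ := Λ * (-1:ℝ)^(k-p)
  set m : ℕ := 2 * k with hm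
  set m2 : ℕ := 2 * k - 2 * p with hm2
  have hm2' : 2 * (k+1) - 2 * p = m2 + 2 := by omega
  -- g := deriv of Lop p k Λ z
  set g : ℝ → ℝ := fun x => a * iteratedDeriv (m+1) z x - b * iteratedDeriv (m2+1) z x with hg
  have hdz : ∀ j, Differentiable ℝ (iteratedDeriv j z) := aux_smooth hsm
  have hderivf : ∀ x, deriv (Lop p k Λ z) x = g x := by
    intro x
    have : Lop p k Λ z = fun x => a * iteratedDeriv m z x - b * iteratedDeriv m2 z x := rfl
    rw [this, deriv_fun_sub (((hdz m).differentiableAt).const_mul a)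
      (((hdz m2).differentiableAt).const_mul b),
      deriv_const_mul a (hdz m).differentiableAt, deriv_const_mul b (hdz m2).differentiableAt,
      ← iteratedDeriv_succ, ← iteratedDeriv_succ]
  have hdiffg : Differentiable ℝ g :=
    ((hdz (m+1)).const_mul a).sub ((hdz (m2+1)).const_mul b)
  have hderivg : ∀ x ∈ Set.Icc (-1:ℝ) 1, deriv g x = 0 := by
    intro x hx
    have h0 := heq x hx
    have : deriv g x = a * iteratedDeriv (m+2) z x - b * iteratedDeriv (m2+2) z x := by
      rw [hg, deriv_fun_sub (((hdz (m+1)).differentiableAt).const_mul a)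
        (((hdz (m2+1)).differentiableAt).const_mul b),
        deriv_const_mul a (hdz (m+1)).differentiableAt,
        deriv_const_mul b (hdz (m2+1)).differentiableAt, ← iteratedDeriv_succ,
        ← iteratedDeriv_succ]
    rw [this]
    -- relate to Lop p n
    have hLop : Lop p n Λ z x = (-1:ℝ)^n * iteratedDeriv (2*n) z x
        - Λ * (-1:ℝ)^(n-p) * iteratedDeriv (2*n - 2*p) z x := rfl
    rw [hLop] at h0
    have e1 : 2 * n = m + 2 := by omega
    have e2 : 2 * n - 2 * p = m2 + 2 := by omega
    have e3 : (-1:ℝ)^n = -a := by rw [hn, pow_succ]; ring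
    have e4 : (-1:ℝ)^(n-p) = -(-1:ℝ)^(k-p) := by
      rw [show n - p = (k - p) + 1 by omega, pow_succ]; ring
    rw [e2, e1, e3, e4] at h0
    have hb : b = Λ * (-1:ℝ)^(k-p) := rfl
    rw [hb]
    linear_combination (-1 : ℝ) * h0
  -- g is zero at 0
  have hg0 : g 0 = 0 := by
    have h1' : iteratedDeriv (m+1) z 0 = 0 := by
      have h := aux_parity hev (m+1) 0
      rw [neg_zero, show ((-1:ℝ))^(m+1) = -1 by rw [pow_succ, hm, pow_mul]; norm_num] at h
      linarith
    have h2' : iteratedDeriv (m2+1) z 0 = 0 := by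
      have h := aux_parity hev (m2+1) 0
      rw [neg_zero, show ((-1:ℝ))^(m2+1) = -1 by
        rw [pow_succ, hm2, show 2*k - 2*p = 2*(k-p) by omega, pow_mul]; norm_num] at h
      linarith
    simp [hg, h1', h2']
  -- g is zero on Icc
  have hgzero : ∀ x ∈ Set.Icc (-1:ℝ) 1, g x = 0 := by
    have hc := aux_const hdiffg hderivg
    intro x hx
    have h0 : g 0 = g (-1) := hc 0 (by norm_num)
    rw [hc x hx, ← h0, hg0]
  -- Lop p k is constant
  have hdiffL : Differentiable ℝ (Lop p k Λ z) :=
    ((hdz m).const_mul a).sub ((hdz m2).const_mul b)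
  have hLc := aux_const hdiffL (fun x hx => by rw [hderivf x]; exact hgzero x hx)
  exact ⟨Lop p k Λ z (-1), hLc⟩
end
end

section
/- Let Λ > 0 and λ₀ = Λ^{1/(2p)}. Then there exists a complex polynomial A of degree n such that Ā(X)·A(X) = (X² − λ₀²)·(X^{2n−2} − Λ·X^{2n−2p−2}), where Ā denotes the polynomial whose coefficients are the complex conjugates of the coefficients of A. -/
/-!
With `ζ` a primitive `2p`-th root of unity, `X ^ (2p) - Λ = ∏_{k < 2p} (X - ζ^k λ₀)`. Apart from
the real roots `±λ₀` (`k = 0, p`), the roots pair off into conjugates `ζ^k λ₀`, `ζ^(2p-k) λ₀` with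
`0 < k < p`, so `X ^ (2p) - Λ = (X² - λ₀²) · B̄ · B` for `B = ∏_{0<k<p} (X - ζ^k λ₀)`. Hence
`A = X ^ (n-p-1) · (X² - λ₀²) · B` has degree `n` and `Ā · A` is the required product.
-/

open Polynomial ComplexConjugate Finset

namespace IsPrimitiveRoot

variable {ζ : ℂ}

theorem conj_pow_eq_pow_sub {N : ℕ} (hζ : IsPrimitiveRoot ζ N) (hN : N ≠ 0) {k : ℕ}
    (hk : k ≤ N) : conj (ζ ^ k) = ζ ^ (N - k) := by
  rw [← Complex.inv_eq_conj (by rw [norm_pow, hζ.norm'_eq_one hN, one_pow]), eq_comm]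
  exact eq_inv_of_mul_eq_one_left (by rw [← pow_add, Nat.sub_add_cancel hk, hζ.pow_eq_one])

variable {p : ℕ}

theorem pow_half_eq_neg_one (hζ : IsPrimitiveRoot ζ (2 * p)) (hp : 0 < p) : ζ ^ p = -1 :=
  (hζ.pow (by omega) (mul_comm 2 p)).eq_neg_one_of_two_right

theorem map_conj_prod_Ico (hζ : IsPrimitiveRoot ζ (2 * p)) (hp : 0 < p) (c : ℝ) :
    (∏ k ∈ Ico 1 p, (X - C (ζ ^ k * c))).map (starRingEnd ℂ) =
      ∏ k ∈ Ico (p + 1) (2 * p), (X - C (ζ ^ k * c)) := by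
  have hreflect := prod_Ico_reflect (fun k => X - C (ζ ^ k * c)) 1 (by omega : p ≤ 2 * p + 1)
  rw [show 2 * p + 1 - p = p + 1 by omega, show 2 * p + 1 - 1 = 2 * p by omega] at hreflect
  rw [Polynomial.map_prod, ← hreflect]
  refine prod_congr rfl fun k hk => ?_
  rw [mem_Ico] at hk
  rw [Polynomial.map_sub, map_X, map_C, map_mul, Complex.conj_ofReal,
    hζ.conj_pow_eq_pow_sub (by omega) (by omega : k ≤ 2 * p)]

theorem X_pow_sub_C_eq_mul_map_conj_mul (hζ : IsPrimitiveRoot ζ (2 * p)) (hp : 0 < p) (c : ℝ) :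
    (X ^ (2 * p) - C ((c : ℂ) ^ (2 * p)) : ℂ[X]) =
      (X ^ 2 - C ((c : ℂ) ^ 2)) *
        ((∏ k ∈ Ico 1 p, (X - C (ζ ^ k * c))).map (starRingEnd ℂ) *
          ∏ k ∈ Ico 1 p, (X - C (ζ ^ k * c))) := by
  rw [X_pow_sub_C_eq_prod hζ (by omega) rfl, hζ.map_conj_prod_Ico hp, range_eq_Ico,
    ← prod_Ico_consecutive _ (Nat.zero_le p) (by omega : p ≤ 2 * p),
    prod_eq_prod_Ico_succ_bot hp, prod_eq_prod_Ico_succ_bot (by omega : p < 2 * p),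
    hζ.pow_half_eq_neg_one hp, pow_zero, one_mul, zero_add, neg_one_mul, map_neg, C_pow]
  ring

end IsPrimitiveRoot

theorem stmt6 (p n : ℕ) (hp : 1 ≤ p) (hpn : p < n)
    (Λ : ℝ) (hΛ : 0 < Λ) (lam0 : ℝ) (hlam0 : lam0 = Λ ^ ((1 : ℝ) / (2 * p))) :
    ∃ A : Polynomial ℂ, A.natDegree = n ∧
      A.map (starRingEnd ℂ) * A =
        (Polynomial.X ^ 2 - Polynomial.C ((lam0 : ℂ) ^ 2)) *
          (Polynomial.X ^ (2 * n - 2)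
            - Polynomial.C ((Λ : ℂ)) * Polynomial.X ^ (2 * n - 2 * p - 2)) := by
  obtain ⟨ζ, hζ⟩ : ∃ ζ : ℂ, IsPrimitiveRoot ζ (2 * p) :=
    ⟨_, Complex.isPrimitiveRoot_exp _ (by omega)⟩
  have hlam0_pow : lam0 ^ (2 * p) = Λ := by
    rw [hlam0, one_div]
    exact_mod_cast Real.rpow_inv_natCast_pow hΛ.le (by omega : 2 * p ≠ 0)
  have hfactor := hζ.X_pow_sub_C_eq_mul_map_conj_mul (by omega) lam0
  rw [← Complex.ofReal_pow, hlam0_pow] at hfactor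
  set B := ∏ k ∈ Ico 1 p, (X - C (ζ ^ k * lam0))
  set m := n - p - 1
  refine ⟨X ^ m * (X ^ 2 - C ((lam0 : ℂ) ^ 2)) * B, ?_, ?_⟩
  · have hB : B.Monic := monic_prod_of_monic _ _ fun k _ => monic_X_sub_C _
    rw [((monic_X_pow m).mul (monic_X_pow_sub_C _ two_ne_zero)).natDegree_mul hB,
      (monic_X_pow m).natDegree_mul (monic_X_pow_sub_C _ two_ne_zero), natDegree_X_pow,
      natDegree_X_pow_sub_C, natDegree_prod_of_monic _ _ fun k _ => monic_X_sub_C _]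
    simp only [natDegree_X_sub_C, sum_const, Nat.card_Ico, smul_eq_mul, mul_one]
    omega
  · rw [show 2 * n - 2 = 2 * m + 2 * p by omega, show 2 * n - 2 * p - 2 = 2 * m by omega]
    simp only [Polynomial.map_mul, Polynomial.map_pow, Polynomial.map_sub, map_X, map_C,
      map_pow, Complex.conj_ofReal] at hfactor ⊢
    linear_combination (-(X ^ 2 - C (lam0 : ℂ) ^ 2) * X ^ (2 * m)) * hfactor
end

section
/- Let n ≥ 2 and Λ > 0. If z ∈ Ω^n is even (z(−x) = z(x)), satisfies L^{2n}(Λ)z = 0 on [−1,1], and additionally L^{2(n−1)}(Λ)z = 0 on [−1,1], then z is identically zero on [−1,1]. -/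
noncomputable section

open intervalIntegral MeasureTheory Set
open scoped ContDiff

namespace Stmt7Aux

variable {z : ℝ → ℝ}

lemma smooth_iter (hz : ContDiff ℝ (⊤ : ℕ∞) z) (k : ℕ) : ContDiff ℝ ∞ (iteratedDeriv k z) := by
  rw [iteratedDeriv_eq_iterate]
  exact (hz.of_le (by simp)).iterate_deriv k

lemma cont_iter (hz : ContDiff ℝ (⊤ : ℕ∞) z) (k : ℕ) : Continuous (iteratedDeriv k z) :=
  (smooth_iter hz k).continuous

lemma hasDeriv_iter (hz : ContDiff ℝ (⊤ : ℕ∞) z) (k : ℕ) (x : ℝ) :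
    HasDerivAt (iteratedDeriv k z) (iteratedDeriv (k+1) z x) x := by
  have h := ((smooth_iter hz k).differentiable (by simp)).differentiableAt (x := x)
  rw [iteratedDeriv_succ]
  exact h.hasDerivAt

lemma ibp (hz : ContDiff ℝ (⊤ : ℕ∞) z) (a b : ℕ)
    (hb1 : iteratedDeriv b z (-1) = 0) (hb2 : iteratedDeriv b z 1 = 0) :
    ∫ x in (-1:ℝ)..1, iteratedDeriv (a+1) z x * iteratedDeriv b z x
      = - ∫ x in (-1:ℝ)..1, iteratedDeriv a z x * iteratedDeriv (b+1) z x := by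
  have h := intervalIntegral.integral_mul_deriv_eq_deriv_mul
    (u := iteratedDeriv b z) (v := iteratedDeriv a z)
    (u' := iteratedDeriv (b+1) z) (v' := iteratedDeriv (a+1) z)
    (a := (-1:ℝ)) (b := 1)
    (fun x _ => hasDeriv_iter hz b x) (fun x _ => hasDeriv_iter hz a x)
    ((cont_iter hz (b+1)).intervalIntegrable _ _)
    ((cont_iter hz (a+1)).intervalIntegrable _ _)
  rw [hb1, hb2] at h
  simp only [zero_mul, sub_zero, zero_sub] at h
  have e1 : (∫ x in (-1:ℝ)..1, iteratedDeriv (a+1) z x * iteratedDeriv b z x)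
      = ∫ x in (-1:ℝ)..1, iteratedDeriv b z x * iteratedDeriv (a+1) z x := by
    simp_rw [mul_comm]
  have e2 : (∫ x in (-1:ℝ)..1, iteratedDeriv a z x * iteratedDeriv (b+1) z x)
      = ∫ x in (-1:ℝ)..1, iteratedDeriv (b+1) z x * iteratedDeriv a z x := by
    simp_rw [mul_comm]
  rw [e1, e2, h]

lemma reduce (hz : ContDiff ℝ (⊤ : ℕ∞) z) (n : ℕ)
    (hbc : ∀ j < n, iteratedDeriv j z (-1) = 0 ∧ iteratedDeriv j z 1 = 0) :
    ∀ j a b : ℕ, j ≤ a → b + j ≤ n →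
    (∫ x in (-1:ℝ)..1, iteratedDeriv a z x * iteratedDeriv b z x)
      = (-1)^j * ∫ x in (-1:ℝ)..1, iteratedDeriv (a-j) z x * iteratedDeriv (b+j) z x := by
  intro j
  induction j with
  | zero => intro a b _ _; simp
  | succ j ih =>
    intro a b hja hbj
    obtain ⟨a', rfl⟩ : ∃ a', a = a' + 1 := ⟨a - 1, by omega⟩
    have hb : b < n := by omega
    rw [ibp hz a' b (hbc b hb).1 (hbc b hb).2, ih a' (b+1) (by omega) (by omega)]
    have h1 : a' + 1 - (j + 1) = a' - j := by omega
    have h2 : b + (j + 1) = b + 1 + j := by omega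
    rw [h1, h2]
    ring

lemma sq_int_zero {g : ℝ → ℝ} (hg : Continuous g)
    (h : (∫ x in (-1:ℝ)..1, (g x)^2) = 0) : ∀ x ∈ Icc (-1:ℝ) 1, g x = 0 := by
  set H : ℝ → ℝ := fun y => ∫ t in (-1:ℝ)..y, (g t)^2 with hH
  have hint : ∀ u v : ℝ, IntervalIntegrable (fun t => (g t)^2) volume u v :=
    fun u v => ((hg.pow 2)).intervalIntegrable _ _
  have hH0 : ∀ y ∈ Icc (-1:ℝ) 1, H y = 0 := by
    intro y hy
    have hadd : H y + (∫ t in y..(1:ℝ), (g t)^2) = ∫ t in (-1:ℝ)..1, (g t)^2 :=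
      intervalIntegral.integral_add_adjacent_intervals (hint _ _) (hint _ _)
    have h1 : 0 ≤ H y := intervalIntegral.integral_nonneg hy.1 (fun u _ => sq_nonneg _)
    have h2 : 0 ≤ ∫ t in y..(1:ℝ), (g t)^2 :=
      intervalIntegral.integral_nonneg hy.2 (fun u _ => sq_nonneg _)
    rw [h] at hadd
    linarith
  have hIoo : ∀ x ∈ Ioo (-1:ℝ) 1, g x = 0 := by
    intro x hx
    have hd : HasDerivAt H ((g x)^2) x :=
      intervalIntegral.integral_hasDerivAt_right (hint _ _)
        ((hg.pow 2).stronglyMeasurableAtFilter _ _) ((hg.pow 2).continuousAt)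
    have hd0 : HasDerivAt H 0 x :=
      (hasDerivAt_const x (0:ℝ)).congr_of_eventuallyEq
        (Filter.eventuallyEq_of_mem (Ioo_mem_nhds hx.1 hx.2)
          (fun y hy => hH0 y (Ioo_subset_Icc_self hy)))
    exact sq_eq_zero_iff.mp (hd.unique hd0)
  intro x hx
  have hcl : Set.EqOn g 0 (closure (Ioo (-1:ℝ) 1)) :=
    (Set.EqOn.closure (fun y hy => hIoo y hy) hg continuous_const)
  exact hcl (by rw [closure_Ioo (by norm_num : (-1:ℝ) ≠ 1)]; exact hx)

lemma down (hz : ContDiff ℝ (⊤ : ℕ∞) z) (j : ℕ) (hj1 : iteratedDeriv j z 1 = 0)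
    (hnext : ∀ x ∈ Icc (-1:ℝ) 1, iteratedDeriv (j+1) z x = 0) :
    ∀ x ∈ Icc (-1:ℝ) 1, iteratedDeriv j z x = 0 := by
  intro x hx
  have hsub : uIcc x (1:ℝ) ⊆ Icc (-1:ℝ) 1 := by
    rw [uIcc_of_le hx.2]
    exact Icc_subset_Icc hx.1 le_rfl
  have hftc : (∫ t in x..(1:ℝ), iteratedDeriv (j+1) z t)
      = iteratedDeriv j z 1 - iteratedDeriv j z x :=
    intervalIntegral.integral_eq_sub_of_hasDerivAt
      (fun t _ => hasDeriv_iter hz j t) ((cont_iter hz (j+1)).intervalIntegrable _ _)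
  have h0 : (∫ t in x..(1:ℝ), iteratedDeriv (j+1) z t) = 0 := by
    rw [intervalIntegral.integral_congr (g := fun _ => (0:ℝ))
      (fun t ht => hnext t (hsub ht))]
    simp
  rw [h0, hj1] at hftc
  linarith

lemma up (hz : ContDiff ℝ (⊤ : ℕ∞) z) (k : ℕ)
    (h : ∀ x ∈ Icc (-1:ℝ) 1, iteratedDeriv k z x = 0) :
    ∀ x ∈ Icc (-1:ℝ) 1, iteratedDeriv (k+1) z x = 0 := by
  have hIoo : ∀ x ∈ Ioo (-1:ℝ) 1, iteratedDeriv (k+1) z x = 0 := by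
    intro x hx
    have h1 := hasDeriv_iter hz k x
    have h2 : HasDerivAt (iteratedDeriv k z) 0 x :=
      (hasDerivAt_const x (0:ℝ)).congr_of_eventuallyEq
        (Filter.eventuallyEq_of_mem (Ioo_mem_nhds hx.1 hx.2)
          (fun y hy => h y (Ioo_subset_Icc_self hy)))
    exact h1.unique h2
  intro x hx
  have hcl : Set.EqOn (iteratedDeriv (k+1) z) 0 (closure (Ioo (-1:ℝ) 1)) :=
    Set.EqOn.closure (fun y hy => hIoo y hy) (cont_iter hz (k+1)) continuous_const
  exact hcl (by rw [closure_Ioo (by norm_num : (-1:ℝ) ≠ 1)]; exact hx)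

lemma expand_int (f g : ℝ → ℝ) (hf : Continuous f) (hg : Continuous g) (c : ℝ) :
    (∫ x in (-1:ℝ)..1, (f x + c * g x)^2)
      = (∫ x in (-1:ℝ)..1, (f x)^2) + 2*c*(∫ x in (-1:ℝ)..1, f x * g x)
        + c^2 * (∫ x in (-1:ℝ)..1, (g x)^2) := by
  have h1 : IntervalIntegrable (fun x => (f x)^2) volume (-1) 1 :=
    (hf.pow 2).intervalIntegrable _ _
  have h2 : IntervalIntegrable (fun x => 2*c*(f x * g x) + c^2 * (g x)^2) volume (-1) 1 :=
    ((continuous_const.mul (hf.mul hg)).add (continuous_const.mul (hg.pow 2))).intervalIntegrable _ _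
  have key : (fun x => (f x + c * g x)^2)
      = fun x => (f x)^2 + (2*c*(f x * g x) + c^2 * (g x)^2) := by
    funext x; ring
  rw [key, intervalIntegral.integral_add h1 h2,
    intervalIntegral.integral_add (f := fun x => 2*c*(f x * g x)) (g := fun x => c^2 * (g x)^2)
      ((continuous_const.mul (hf.mul hg)).intervalIntegrable _ _)
      ((continuous_const.mul (hg.pow 2)).intervalIntegrable _ _),
    intervalIntegral.integral_const_mul, intervalIntegral.integral_const_mul]
  ring

lemma cs_int (f g : ℝ → ℝ) (hf : Continuous f) (hg : Continuous g) :
    (∫ x in (-1:ℝ)..1, f x * g x)^2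
      ≤ (∫ x in (-1:ℝ)..1, (f x)^2) * (∫ x in (-1:ℝ)..1, (g x)^2) := by
  set A := ∫ x in (-1:ℝ)..1, (f x)^2 with hA
  set B := ∫ x in (-1:ℝ)..1, f x * g x with hB
  set C := ∫ x in (-1:ℝ)..1, (g x)^2 with hC
  have hCnn : 0 ≤ C := intervalIntegral.integral_nonneg (by norm_num) (fun u _ => sq_nonneg _)
  have hAnn : 0 ≤ A := intervalIntegral.integral_nonneg (by norm_num) (fun u _ => sq_nonneg _)
  rcases eq_or_lt_of_le hCnn with hC0 | hCpos
  · have hg0 := sq_int_zero hg hC0.symm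
    have hB0 : B = 0 := by
      rw [hB, intervalIntegral.integral_congr (g := fun _ => (0:ℝ))]
      · simp
      · intro t ht
        rw [uIcc_of_le (by norm_num : (-1:ℝ) ≤ 1)] at ht
        simp [hg0 t ht]
    rw [hB0, ← hC0]
    simp
  · have h0 : 0 ≤ ∫ x in (-1:ℝ)..1, (f x + (-(B/C)) * g x)^2 :=
      intervalIntegral.integral_nonneg (by norm_num) (fun u _ => sq_nonneg _)
    rw [expand_int f g hf hg, ← hA, ← hB, ← hC] at h0
    have hCne : C ≠ 0 := ne_of_gt hCpos
    have e : A + 2*(-(B/C))*B + (-(B/C))^2*C = (A*C - B^2)/C := by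
      field_simp; ring
    rw [e] at h0
    have h3 : 0 ≤ A*C - B^2 := by
      by_contra hneg
      push_neg at hneg
      have : (A*C - B^2)/C < 0 := div_neg_of_neg_of_pos (by linarith) hCpos
      linarith
    linarith

end Stmt7Aux

open Stmt7Aux

theorem stmt7 (p n : ℕ) (hp : 1 ≤ p) (hpn : p < n) (hn : 2 ≤ n)
    (Λ : ℝ) (hΛ : 0 < Λ) (z : ℝ → ℝ) (hz : Omega n z)
    (heven : ∀ x, z (-x) = z x)
    (hLn : ∀ x ∈ Set.Icc (-1:ℝ) 1, Lop p n Λ z x = 0)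
    (hLn1 : ∀ x ∈ Set.Icc (-1:ℝ) 1, Lop p (n - 1) Λ z x = 0) :
    ∀ x ∈ Set.Icc (-1:ℝ) 1, z x = 0 := by
  obtain ⟨hsm, hbc⟩ := hz
  obtain ⟨m, rfl⟩ : ∃ m, n = m + p + 1 := ⟨n - p - 1, by omega⟩
  set J : ℕ → ℝ := fun k => ∫ x in (-1:ℝ)..1, (iteratedDeriv k z x)^2 with hJ
  have fold : ∀ k, (∫ x in (-1:ℝ)..1, (iteratedDeriv k z x)^2) = J k := fun k => by rw [hJ]
  have Jnn : ∀ k, 0 ≤ J k := fun k => by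
    rw [← fold k]
    exact intervalIntegral.integral_nonneg (by norm_num) (fun u _ => sq_nonneg _)
  have red : ∀ a k : ℕ, a = 2*k → k ≤ m+p+1 →
      (∫ x in (-1:ℝ)..1, iteratedDeriv a z x * z x) = (-1:ℝ)^k * J k := by
    intro a k ha hk
    have h := reduce hsm (m+p+1) hbc k a 0 (by omega) (by omega)
    have e1 : a - k = k := by omega
    rw [e1, zero_add] at h
    simp only [iteratedDeriv_zero] at h
    rw [h]
    congr 1
    rw [← fold k]
    simp_rw [← pow_two]
  have mixed : ∀ k : ℕ, k < m+p+1 →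
      (∫ x in (-1:ℝ)..1, iteratedDeriv (k+2) z x * iteratedDeriv k z x) = -(J (k+1)) := by
    intro k hk
    have h := ibp hsm (k+1) k (hbc k hk).1 (hbc k hk).2
    have e : k + 2 = k + 1 + 1 := by omega
    rw [e, h]
    congr 1
    rw [← fold (k+1)]
    simp_rw [← pow_two]
  have cs : ∀ k : ℕ, k < m+p+1 → (J (k+1))^2 ≤ J (k+2) * J k := by
    intro k hk
    have h := cs_int (iteratedDeriv (k+2) z) (iteratedDeriv k z)
      (cont_iter hsm _) (cont_iter hsm _)
    rw [mixed k hk, fold, fold] at h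
    calc (J (k+1))^2 = (-(J (k+1)))^2 := by ring
    _ ≤ _ := h
  have intzero : ∀ (c1 c2 : ℝ) (a b : ℕ),
      (∀ x ∈ Set.Icc (-1:ℝ) 1, c1 * iteratedDeriv a z x - c2 * iteratedDeriv b z x = 0) →
      c1 * (∫ x in (-1:ℝ)..1, iteratedDeriv a z x * z x)
        = c2 * (∫ x in (-1:ℝ)..1, iteratedDeriv b z x * z x) := by
    intro c1 c2 a b hpt
    have h0 : (∫ x in (-1:ℝ)..1,
        (c1 * iteratedDeriv a z x - c2 * iteratedDeriv b z x) * z x) = 0 := by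
      rw [intervalIntegral.integral_congr (g := fun _ => (0:ℝ))]
      · simp
      · intro t ht
        rw [uIcc_of_le (by norm_num : (-1:ℝ) ≤ 1)] at ht
        show (c1 * iteratedDeriv a z t - c2 * iteratedDeriv b z t) * z t = 0
        rw [hpt t ht, zero_mul]
    have h1 : IntervalIntegrable (fun x => c1 * (iteratedDeriv a z x * z x)) volume (-1) 1 :=
      (continuous_const.mul ((cont_iter hsm a).mul hsm.continuous)).intervalIntegrable _ _
    have h2 : IntervalIntegrable (fun x => c2 * (iteratedDeriv b z x * z x)) volume (-1) 1 :=
      (continuous_const.mul ((cont_iter hsm b).mul hsm.continuous)).intervalIntegrable _ _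
    have h3 : (∫ x in (-1:ℝ)..1, (c1 * iteratedDeriv a z x - c2 * iteratedDeriv b z x) * z x)
        = (∫ x in (-1:ℝ)..1, c1 * (iteratedDeriv a z x * z x))
          - ∫ x in (-1:ℝ)..1, c2 * (iteratedDeriv b z x * z x) := by
      rw [← intervalIntegral.integral_sub h1 h2]
      apply intervalIntegral.integral_congr
      intro t ht; ring
    rw [h3, intervalIntegral.integral_const_mul, intervalIntegral.integral_const_mul] at h0
    linarith
  have hApt : ∀ x ∈ Set.Icc (-1:ℝ) 1,
      (-1:ℝ)^(m+p) * iteratedDeriv (2*(m+p)) z x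
        - Λ * (-1:ℝ)^m * iteratedDeriv (2*m) z x = 0 := by
    intro x hx
    have h := hLn1 x hx
    simp only [Lop] at h
    have e1 : m + p + 1 - 1 = m + p := by omega
    rw [e1] at h
    have e2 : m + p - p = m := by omega
    have e3 : 2*(m+p) - 2*p = 2*m := by omega
    rw [e2, e3] at h
    exact h
  have hBpt : ∀ x ∈ Set.Icc (-1:ℝ) 1,
      (-1:ℝ)^(m+p+1) * iteratedDeriv (2*(m+p+1)) z x
        - Λ * (-1:ℝ)^(m+1) * iteratedDeriv (2*(m+1)) z x = 0 := by
    intro x hx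
    have h := hLn x hx
    simp only [Lop] at h
    have e2 : m + p + 1 - p = m + 1 := by omega
    have e3 : 2*(m+p+1) - 2*p = 2*(m+1) := by omega
    rw [e2, e3] at h
    exact h
  have p1 : ∀ k : ℕ, (-1:ℝ)^k * (-1:ℝ)^k = 1 := by
    intro k
    rw [← pow_add, ← two_mul, pow_mul]
    norm_num
  have EqA : J (m+p) = Λ * J m := by
    have h := intzero ((-1:ℝ)^(m+p)) (Λ * (-1:ℝ)^m) (2*(m+p)) (2*m) hApt
    rw [red (2*(m+p)) (m+p) rfl (by omega), red (2*m) m rfl (by omega)] at h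
    have q1 := p1 (m+p)
    have q2 := p1 m
    linear_combination h - J (m+p) * q1 + Λ * J m * q2
  have EqB : J (m+p+1) = Λ * J (m+1) := by
    have h := intzero ((-1:ℝ)^(m+p+1)) (Λ * (-1:ℝ)^(m+1)) (2*(m+p+1)) (2*(m+1)) hBpt
    rw [red (2*(m+p+1)) (m+p+1) rfl (by omega), red (2*(m+1)) (m+1) rfl (by omega)] at h
    have q1 := p1 (m+p+1)
    have q2 := p1 (m+1)
    linear_combination h - J (m+p+1) * q1 + Λ * J (m+1) * q2
  by_cases hJm : J m = 0
  · -- degenerate case: z^{(m)} ≡ 0 on the interval, propagate down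
    have hFm : ∀ x ∈ Set.Icc (-1:ℝ) 1, iteratedDeriv m z x = 0 :=
      sq_int_zero (cont_iter hsm m) (by rw [fold]; exact hJm)
    have hdown : ∀ i, i ≤ m → ∀ x ∈ Set.Icc (-1:ℝ) 1, iteratedDeriv (m - i) z x = 0 := by
      intro i
      induction i with
      | zero => intro _; simpa using hFm
      | succ i ih =>
        intro hi
        have h1 := ih (by omega)
        have e : m - i = (m - (i+1)) + 1 := by omega
        rw [e] at h1
        exact down hsm (m - (i+1)) (hbc _ (by omega)).2 h1
    intro x hx
    have h := hdown m le_rfl x hx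
    rwa [Nat.sub_self, iteratedDeriv_zero] at h
  · have hJm' : 0 < J m := lt_of_le_of_ne (Jnn m) (Ne.symm hJm)
    have hstepzero : ∀ k, J k = 0 → J (k+1) = 0 := by
      intro k hk
      have h0 : ∀ x ∈ Set.Icc (-1:ℝ) 1, iteratedDeriv k z x = 0 :=
        sq_int_zero (cont_iter hsm k) (by rw [fold]; exact hk)
      have h1 := up hsm k h0
      rw [← fold (k+1)]
      rw [intervalIntegral.integral_congr (g := fun _ => (0:ℝ))]
      · simp
      · intro t ht
        rw [uIcc_of_le (by norm_num : (-1:ℝ) ≤ 1)] at ht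
        simp [h1 t ht]
    have hposchain : ∀ k, k ≤ m + p → 0 < J k := by
      intro k hk
      by_contra hle
      push_neg at hle
      have hk0 : J k = 0 := le_antisymm hle (Jnn k)
      have hup : ∀ d, J (k + d) = 0 := by
        intro d
        induction d with
        | zero => simpa using hk0
        | succ d ih => exact hstepzero (k+d) ih
      have hmp : J (m+p) = 0 := by
        have h := hup (m+p-k)
        rwa [show k + (m+p-k) = m+p by omega] at h
      rw [EqA] at hmp
      exact absurd hmp (ne_of_gt (mul_pos hΛ hJm'))
    set r : ℕ → ℝ := fun k => J (k+1) / J k with hr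
    have rstep : ∀ k, k + 1 ≤ m + p → r k ≤ r (k+1) := by
      intro k hk
      have hcs := cs k (by omega)
      have h0 := hposchain k (by omega)
      have h1 := hposchain (k+1) (by omega)
      show J (k+1)/J k ≤ J (k+1+1)/J (k+1)
      rw [div_le_div_iff₀ h0 h1]
      have e : k + 1 + 1 = k + 2 := by omega
      rw [e]
      nlinarith [hcs]
    have rmono : ∀ i, i ≤ p → r m ≤ r (m + i) := by
      intro i
      induction i with
      | zero => intro _; simp
      | succ i ih =>
        intro hi
        have h1 := ih (by omega)
        have h2 := rstep (m+i) (by omega)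
        have e : m + (i+1) = m + i + 1 := by omega
        rw [e]
        exact le_trans h1 h2
    have req : r m = r (m + p) := by
      show J (m+1)/J m = J (m+p+1)/J (m+p)
      rw [EqA, EqB, mul_div_mul_left _ _ (ne_of_gt hΛ)]
    have rlast : r (m + (p-1)) = r (m + p) := by
      have h1 := rmono (p-1) (by omega)
      have h2 := rstep (m + (p-1)) (by omega)
      have e : m + (p-1) + 1 = m + p := by omega
      rw [e] at h2
      linarith [h1, h2, le_of_eq req]
    set q := m + (p - 1) with hq
    have hq1 : q + 1 = m + p := by omega
    have hq2 : q + 2 = m + p + 1 := by omega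
    have hqpos := hposchain q (by omega)
    have hmppos := hposchain (m+p) le_rfl
    have hkey : J (m+p) * J (m+p) = J (m+p+1) * J q := by
      have h : J (q+1) / J q = J (m+p+1) / J (m+p) := by
        have := rlast
        rwa [show r (m + (p-1)) = J (q+1) / J q from rfl,
          show r (m+p) = J (m+p+1) / J (m+p) from rfl] at this
      rw [hq1] at h
      field_simp at h
      linarith [h]
    set c := J (m+p) / J q with hc
    have hcpos : 0 < c := div_pos hmppos hqpos
    have hmix : (∫ x in (-1:ℝ)..1, iteratedDeriv (q+2) z x * iteratedDeriv q z x)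
        = -(J (q+1)) := mixed q (by omega)
    have hzero : (∫ x in (-1:ℝ)..1,
        (iteratedDeriv (q+2) z x + c * iteratedDeriv q z x)^2) = 0 := by
      rw [expand_int _ _ (cont_iter hsm (q+2)) (cont_iter hsm q) c, hmix, fold, fold,
        hq1, hq2, hc]
      field_simp
      linear_combination (-1) * hkey
    have hODE : ∀ x ∈ Set.Icc (-1:ℝ) 1,
        iteratedDeriv (q+2) z x + c * iteratedDeriv q z x = 0 := by
      have hcont : Continuous (fun x => iteratedDeriv (q+2) z x + c * iteratedDeriv q z x) :=
        (cont_iter hsm _).add (continuous_const.mul (cont_iter hsm _))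
      exact sq_int_zero hcont hzero
    set E : ℝ → ℝ := fun x => (iteratedDeriv (q+1) z x)^2 + c * (iteratedDeriv q z x)^2 with hE
    have hEderiv : ∀ x : ℝ, HasDerivAt E
        (2 * iteratedDeriv (q+1) z x * (iteratedDeriv (q+2) z x + c * iteratedDeriv q z x)) x := by
      intro x
      have h1 : HasDerivAt (fun y => (iteratedDeriv (q+1) z y)^2)
          ((2:ℕ) * (iteratedDeriv (q+1) z x)^(2-1) * iteratedDeriv (q+1+1) z x) x :=
        (hasDeriv_iter hsm (q+1) x).pow 2
      have h2 : HasDerivAt (fun y => c * (iteratedDeriv q z y)^2)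
          (c * ((2:ℕ) * (iteratedDeriv q z x)^(2-1) * iteratedDeriv (q+1) z x)) x :=
        ((hasDeriv_iter hsm q x).pow 2).const_mul c
      have h := h1.add h2
      refine h.congr_deriv ?_
      · symm
        have e : q + 1 + 1 = q + 2 := by omega
        rw [e]
        push_cast
        norm_num
        ring
      
    have hE0 : ∀ x ∈ Set.Icc (-1:ℝ) 1, E x = 0 := by
      intro x hx
      have hsub : uIcc x (1:ℝ) ⊆ Set.Icc (-1:ℝ) 1 := by
        rw [uIcc_of_le hx.2]
        exact Icc_subset_Icc hx.1 le_rfl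
      have hcontE' : Continuous (fun t => 2 * iteratedDeriv (q+1) z t *
          (iteratedDeriv (q+2) z t + c * iteratedDeriv q z t)) :=
        (continuous_const.mul (cont_iter hsm _)).mul
          ((cont_iter hsm _).add (continuous_const.mul (cont_iter hsm _)))
      have hftc : (∫ t in x..(1:ℝ), 2 * iteratedDeriv (q+1) z t *
          (iteratedDeriv (q+2) z t + c * iteratedDeriv q z t)) = E 1 - E x :=
        intervalIntegral.integral_eq_sub_of_hasDerivAt (fun t _ => hEderiv t)
          (hcontE'.intervalIntegrable _ _)
      have hz2 : (∫ t in x..(1:ℝ), 2 * iteratedDeriv (q+1) z t *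
          (iteratedDeriv (q+2) z t + c * iteratedDeriv q z t)) = 0 := by
        rw [intervalIntegral.integral_congr (g := fun _ => (0:ℝ))]
        · simp
        · intro t ht
          show 2 * iteratedDeriv (q+1) z t *
            (iteratedDeriv (q+2) z t + c * iteratedDeriv q z t) = 0
          rw [hODE t (hsub ht), mul_zero]
      have hE1 : E 1 = 0 := by
        show (iteratedDeriv (q+1) z 1)^2 + c * (iteratedDeriv q z 1)^2 = 0
        rw [(hbc (q+1) (by omega)).2, (hbc q (by omega)).2]
        norm_num
      rw [hz2, hE1] at hftc
      linarith
    have hFq : ∀ x ∈ Set.Icc (-1:ℝ) 1, iteratedDeriv q z x = 0 := by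
      intro x hx
      have h := hE0 x hx
      have h' : (iteratedDeriv (q+1) z x)^2 + c * (iteratedDeriv q z x)^2 = 0 := h
      have hb2 : (iteratedDeriv q z x)^2 ≤ 0 := by nlinarith [sq_nonneg (iteratedDeriv (q+1) z x)]
      exact sq_eq_zero_iff.mp (le_antisymm hb2 (sq_nonneg _))
    have hJq : J q = 0 := by
      rw [← fold q]
      rw [intervalIntegral.integral_congr (g := fun _ => (0:ℝ))]
      · simp
      · intro t ht
        rw [uIcc_of_le (by norm_num : (-1:ℝ) ≤ 1)] at ht
        simp [hFq t ht]
    exact absurd hJq (ne_of_gt hqpos)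
end
end

section
/- Assume n − 1 ≥ p. If z₁ is an even eigenfunction at level n−1 with eigenvalue Λ₁ > 0 and z₂ is an even eigenfunction at level n with eigenvalue Λ₂ > 0, then Λ₁ ≠ Λ₂. -/
noncomputable section

open intervalIntegral Set


lemma smoothD {f : ℝ → ℝ} (hf : ContDiff ℝ (⊤:ℕ∞) f) (n : ℕ) :
    ContDiff ℝ (⊤:ℕ∞) (iteratedDeriv n f) := by
  rw [iteratedDeriv_eq_iterate]; exact ContDiff.iterate_deriv n hf

lemma contD {f : ℝ → ℝ} (hf : ContDiff ℝ (⊤:ℕ∞) f) (n : ℕ) :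
    Continuous (iteratedDeriv n f) :=
  (smoothD hf n).continuous

lemma hasD {f : ℝ → ℝ} (hf : ContDiff ℝ (⊤:ℕ∞) f) (n : ℕ) (x : ℝ) :
    HasDerivAt (iteratedDeriv n f) (iteratedDeriv (n+1) f x) x := by
  rw [iteratedDeriv_succ]
  exact ((smoothD hf n).differentiable (by simp)).differentiableAt.hasDerivAt

lemma DD {f : ℝ → ℝ} (a b : ℕ) : iteratedDeriv a (iteratedDeriv b f) = iteratedDeriv (a + b) f := by
  simp only [iteratedDeriv_eq_iterate, ← Function.iterate_add_apply]

lemma smooth_deriv {f : ℝ → ℝ} (hf : ContDiff ℝ (⊤:ℕ∞) f) : ContDiff ℝ (⊤:ℕ∞) (deriv f) := by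
  have := smoothD hf 1
  rwa [iteratedDeriv_one] at this

lemma intg {f g : ℝ → ℝ} (hf : Continuous f) (hg : Continuous g) (a b : ℝ) :
    IntervalIntegrable (fun x => f x * g x) MeasureTheory.volume a b :=
  (hf.mul hg).intervalIntegrable a b

/-- single integration by parts -/
lemma ibp_one {u v : ℝ → ℝ} (hu : ContDiff ℝ (⊤:ℕ∞) u) (hv : ContDiff ℝ (⊤:ℕ∞) v) :
    ∫ x in (-1:ℝ)..1, deriv u x * v x
      = u 1 * v 1 - u (-1) * v (-1) - ∫ x in (-1:ℝ)..1, u x * deriv v x := by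
  have h := integral_deriv_mul_eq_sub (a := -1) (b := 1) (u := u) (v := v) (u' := deriv u) (v' := deriv v)
    (fun x _ => ((hu.differentiable (by simp)).differentiableAt).hasDerivAt)
    (fun x _ => ((hv.differentiable (by simp)).differentiableAt).hasDerivAt)
    ((smooth_deriv hu).continuous.intervalIntegrable _ _)
    ((smooth_deriv hv).continuous.intervalIntegrable _ _)
  have h2 : ∫ x in (-1:ℝ)..1, deriv u x * v x + u x * deriv v x
      = (∫ x in (-1:ℝ)..1, deriv u x * v x) + ∫ x in (-1:ℝ)..1, u x * deriv v x :=
    integral_add (intg (smooth_deriv hu).continuous hv.continuous _ _)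
      (intg hu.continuous (smooth_deriv hv).continuous _ _)
  rw [h2] at h
  linarith

/-- iterated integration by parts -/
lemma ibp_master {u v : ℝ → ℝ} (hu : ContDiff ℝ (⊤:ℕ∞) u) (hv : ContDiff ℝ (⊤:ℕ∞) v) (q : ℕ) :
    ∫ x in (-1:ℝ)..1, iteratedDeriv q u x * v x
      = (∑ i ∈ Finset.range q, (-1:ℝ)^i *
          (iteratedDeriv (q-1-i) u 1 * iteratedDeriv i v 1
            - iteratedDeriv (q-1-i) u (-1) * iteratedDeriv i v (-1)))
        + (-1:ℝ)^q * ∫ x in (-1:ℝ)..1, u x * iteratedDeriv q v x := by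
  induction q generalizing u with
  | zero => simp
  | succ q ih =>
    have hdu : ContDiff ℝ (⊤:ℕ∞) (deriv u) := smooth_deriv hu
    have h1 : ∫ x in (-1:ℝ)..1, iteratedDeriv (q+1) u x * v x
        = ∫ x in (-1:ℝ)..1, iteratedDeriv q (deriv u) x * v x := by
      simp_rw [iteratedDeriv_succ'] 
    rw [h1, ih hdu]
    have h2 : ∫ x in (-1:ℝ)..1, deriv u x * iteratedDeriv q v x
        = u 1 * iteratedDeriv q v 1 - u (-1) * iteratedDeriv q v (-1)
          - ∫ x in (-1:ℝ)..1, u x * iteratedDeriv (q+1) v x := by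
      have h := ibp_one hu (smoothD hv q)
      rw [← iteratedDeriv_succ] at h
      exact h
    have h3 : ∀ i ∈ Finset.range q,
        (-1:ℝ)^i * (iteratedDeriv (q-1-i) (deriv u) 1 * iteratedDeriv i v 1
            - iteratedDeriv (q-1-i) (deriv u) (-1) * iteratedDeriv i v (-1))
        = (-1:ℝ)^i * (iteratedDeriv (q+1-1-i) u 1 * iteratedDeriv i v 1
            - iteratedDeriv (q+1-1-i) u (-1) * iteratedDeriv i v (-1)) := by
      intro i hi
      have hi' : i < q := Finset.mem_range.mp hi
      have e : q+1-1-i = (q-1-i)+1 := by omega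
      rw [e, iteratedDeriv_succ']
    rw [Finset.sum_congr rfl h3, Finset.sum_range_succ]
    have h4 : iteratedDeriv (q+1-1-q) u = u := by
      have : q+1-1-q = 0 := by omega
      rw [this, iteratedDeriv_zero]
    rw [h2, h4]
    ring

lemma evenD {z : ℝ → ℝ} (he : ∀ x, z (-x) = z x) (j : ℕ) :
    iteratedDeriv j z (-1) = (-1:ℝ)^j * iteratedDeriv j z 1 := by
  have h := iteratedDeriv_comp_neg j z 1
  have h2 : (fun x => z (-x)) = z := funext he
  rw [h2, smul_eq_mul] at h
  rw [h, ← mul_assoc, ← mul_pow]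
  norm_num

lemma sq_int_zero {g : ℝ → ℝ} (hg : Continuous g)
    (h0 : ∫ x in (-1:ℝ)..1, g x * g x = 0) : ∀ x ∈ Icc (-1:ℝ) 1, g x = 0 := by
  by_contra hc
  push_neg at hc
  obtain ⟨x0, hx0, hgx⟩ := hc
  have hb1 : (-1:ℝ) ≤ x0 := hx0.1
  have hb2 : x0 ≤ (1:ℝ) := hx0.2
  set f : ℝ → ℝ := fun x => g x * g x with hfdef
  have hf : Continuous f := hg.mul hg
  have hfnn : ∀ x, 0 ≤ f x := fun x => mul_self_nonneg _
  have hfx0 : 0 < f x0 := mul_self_pos.mpr hgx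
  have hopen : IsOpen {x | 0 < f x} := isOpen_lt continuous_const hf
  obtain ⟨ε, hε, hball⟩ := Metric.isOpen_iff.mp hopen x0 hfx0
  set c := max (-1:ℝ) (x0 - ε/2) with hcdef
  set d := min (1:ℝ) (x0 + ε/2) with hddef
  have hcd : c < d := by
    rw [hcdef, hddef, lt_min_iff, max_lt_iff, max_lt_iff]
    refine ⟨⟨by norm_num, by linarith⟩, by linarith, by linarith⟩
  have hc1 : (-1:ℝ) ≤ c := le_max_left _ _
  have hd1 : d ≤ (1:ℝ) := min_le_left _ _
  have hsub : Ioo c d ⊆ Metric.ball x0 ε := by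
    intro x hx
    rw [Real.ball_eq_Ioo]
    constructor
    · have := le_max_right (-1:ℝ) (x0 - ε/2)
      have := hx.1
      linarith [le_max_right (-1:ℝ) (x0 - ε/2)]
    · have := min_le_right (1:ℝ) (x0 + ε/2)
      have := hx.2
      linarith [min_le_right (1:ℝ) (x0 + ε/2)]
  have hpos : 0 < ∫ x in c..d, f x :=
    intervalIntegral_pos_of_pos_on (hf.intervalIntegrable _ _)
      (fun x hx => hball (hsub hx)) hcd
  have e1 : (∫ x in (-1:ℝ)..c, f x) + (∫ x in c..(1:ℝ), f x) = ∫ x in (-1:ℝ)..1, f x :=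
    integral_add_adjacent_intervals (hf.intervalIntegrable _ _) (hf.intervalIntegrable _ _)
  have e2 : (∫ x in c..d, f x) + (∫ x in d..(1:ℝ), f x) = ∫ x in c..(1:ℝ), f x :=
    integral_add_adjacent_intervals (hf.intervalIntegrable _ _) (hf.intervalIntegrable _ _)
  have n1 : 0 ≤ ∫ x in (-1:ℝ)..c, f x :=
    integral_nonneg hc1 (fun x _ => hfnn x)
  have n2 : 0 ≤ ∫ x in d..(1:ℝ), f x :=
    integral_nonneg hd1 (fun x _ => hfnn x)
  have : (0:ℝ) < ∫ x in (-1:ℝ)..1, f x := by linarith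
  rw [hfdef] at this
  simp only [f] at this
  linarith [h0, this]

lemma downto_zero {z : ℝ → ℝ} (hz : ContDiff ℝ (⊤:ℕ∞) z) (j : ℕ)
    (hnext : ∀ x ∈ Icc (-1:ℝ) 1, iteratedDeriv (j+1) z x = 0)
    (hb : iteratedDeriv j z 1 = 0) :
    ∀ x ∈ Icc (-1:ℝ) 1, iteratedDeriv j z x = 0 := by
  intro x hx
  have hftc : ∫ t in x..1, iteratedDeriv (j+1) z t
      = iteratedDeriv j z 1 - iteratedDeriv j z x :=
    integral_eq_sub_of_hasDerivAt (fun t _ => hasD hz j t)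
      ((contD hz (j+1)).intervalIntegrable _ _)
  have hzero : ∫ t in x..1, iteratedDeriv (j+1) z t = 0 := by
    rw [integral_congr (g := fun _ => (0:ℝ)), integral_zero]
    intro t ht
    rw [Set.uIcc_of_le hx.2] at ht
    exact hnext t ⟨le_trans hx.1 ht.1, ht.2⟩
  rw [hzero, hb] at hftc
  linarith

lemma lop_pair (p k : ℕ) (Λ : ℝ) {z w : ℝ → ℝ} (hz : ContDiff ℝ (⊤:ℕ∞) z) (hw : Continuous w)
    (hL : ∀ x ∈ Icc (-1:ℝ) 1, Lop p k Λ z x = 0) :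
    (-1:ℝ)^k * ∫ x in (-1:ℝ)..1, iteratedDeriv (2*k) z x * w x
      = Λ * (-1:ℝ)^(k-p) * ∫ x in (-1:ℝ)..1, iteratedDeriv (2*k-2*p) z x * w x := by
  have h0 : ∫ x in (-1:ℝ)..1, Lop p k Λ z x * w x = 0 := by
    rw [integral_congr (g := fun _ => (0:ℝ)), integral_zero]
    intro x hx
    rw [Set.uIcc_of_le (by norm_num : (-1:ℝ) ≤ 1)] at hx
    simp only [hL x hx, zero_mul]
  have h1 : (fun x => Lop p k Λ z x * w x)
      = fun x => (-1:ℝ)^k * (iteratedDeriv (2*k) z x * w x)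
          - (Λ * (-1:ℝ)^(k-p)) * (iteratedDeriv (2*k-2*p) z x * w x) := by
    funext x; simp only [Lop]; ring
  rw [h1] at h0
  rw [integral_sub (f := fun x => (-1:ℝ)^k * (iteratedDeriv (2*k) z x * w x))
      (g := fun x => Λ * (-1:ℝ)^(k-p) * (iteratedDeriv (2*k-2*p) z x * w x))
      (((continuous_const.mul ((contD hz (2*k)).mul hw))).intervalIntegrable _ _)
      (((continuous_const.mul ((contD hz (2*k-2*p)).mul hw))).intervalIntegrable _ _),
    integral_const_mul, integral_const_mul] at h0
  linarith

lemma int_comm (f g : ℝ → ℝ) :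
    ∫ x in (-1:ℝ)..1, f x * g x = ∫ x in (-1:ℝ)..1, g x * f x := by
  simp_rw [mul_comm]

lemma cross (p k : ℕ) (hp : 1 ≤ p) (hpk : p ≤ k) (Λ : ℝ) {z₁ z₂ : ℝ → ℝ}
    (hz₁ : EvenEig p k Λ z₁) (hz₂ : EvenEig p (k+1) Λ z₂) :
    iteratedDeriv k z₁ 1 * iteratedDeriv (k+1) z₂ 1 = 0 := by
  obtain ⟨⟨hz₁s', hz₁b⟩, _, hz₁e, hz₁L⟩ := hz₁
  obtain ⟨⟨hz₂s', hz₂b⟩, _, hz₂e, hz₂L⟩ := hz₂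
  have hz₁s : ContDiff ℝ (⊤:ℕ∞) z₁ := hz₁s'.of_le (by simp)
  have hz₂s : ContDiff ℝ (⊤:ℕ∞) z₂ := hz₂s'.of_le (by simp)
  -- equation (3)
  have hA0 := ibp_master (smoothD hz₁s k) (smoothD hz₂s 2) k
  simp only [DD] at hA0
  have e2k : k + k = 2*k := by omega
  rw [e2k] at hA0
  have hs : (∑ i ∈ Finset.range k, (-1:ℝ)^i *
        (iteratedDeriv (k-1-i+k) z₁ 1 * iteratedDeriv (i+2) z₂ 1
          - iteratedDeriv (k-1-i+k) z₁ (-1) * iteratedDeriv (i+2) z₂ (-1)))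
      = (-1:ℝ)^(k-1) * (iteratedDeriv k z₁ 1 * iteratedDeriv (k+1) z₂ 1
          - iteratedDeriv k z₁ (-1) * iteratedDeriv (k+1) z₂ (-1)) := by
    rw [Finset.sum_eq_single_of_mem (k-1) (Finset.mem_range.mpr (by omega))]
    · have e1 : k-1-(k-1)+k = k := by omega
      have e2 : k-1+2 = k+1 := by omega
      rw [e1, e2]
    · intro i hi hne
      have hi' : i < k := Finset.mem_range.mp hi
      rw [(hz₂b (i+2) (by omega)).2, (hz₂b (i+2) (by omega)).1]
      ring
  rw [hs] at hA0
  -- equation (4)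
  have hC0 := ibp_master (smoothD hz₂s (k+2)) hz₁s k
  simp only [DD] at hC0
  have e2k2 : k + (k+2) = 2*k+2 := by omega
  rw [e2k2] at hC0
  have hsC : (∑ i ∈ Finset.range k, (-1:ℝ)^i *
        (iteratedDeriv (k-1-i+(k+2)) z₂ 1 * iteratedDeriv i z₁ 1
          - iteratedDeriv (k-1-i+(k+2)) z₂ (-1) * iteratedDeriv i z₁ (-1))) = 0 := by
    apply Finset.sum_eq_zero
    intro i hi
    have hi' : i < k := Finset.mem_range.mp hi
    rw [(hz₁b i hi').2, (hz₁b i hi').1]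
    ring
  rw [hsC, zero_add] at hC0
  rw [int_comm (iteratedDeriv (k+2) z₂) (iteratedDeriv k z₁)] at hC0
  -- equation (5)
  have hB0 := ibp_master (smoothD hz₁s (k-p)) (smoothD hz₂s 2) (k-p)
  simp only [DD] at hB0
  have e2kp : (k-p) + (k-p) = 2*k-2*p := by omega
  rw [e2kp] at hB0
  have hsB : (∑ i ∈ Finset.range (k-p), (-1:ℝ)^i *
        (iteratedDeriv (k-p-1-i+(k-p)) z₁ 1 * iteratedDeriv (i+2) z₂ 1
          - iteratedDeriv (k-p-1-i+(k-p)) z₁ (-1) * iteratedDeriv (i+2) z₂ (-1))) = 0 := by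
    apply Finset.sum_eq_zero
    intro i hi
    have hi' : i < k-p := Finset.mem_range.mp hi
    rw [(hz₂b (i+2) (by omega)).2, (hz₂b (i+2) (by omega)).1]
    ring
  rw [hsB, zero_add] at hB0
  -- equation (6)
  have hE0 := ibp_master (smoothD hz₂s (k-p+2)) hz₁s (k-p)
  simp only [DD] at hE0
  have e2kp2 : (k-p) + (k-p+2) = 2*k+2-2*p := by omega
  rw [e2kp2] at hE0
  have hsE : (∑ i ∈ Finset.range (k-p), (-1:ℝ)^i *
        (iteratedDeriv (k-p-1-i+(k-p+2)) z₂ 1 * iteratedDeriv i z₁ 1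
          - iteratedDeriv (k-p-1-i+(k-p+2)) z₂ (-1) * iteratedDeriv i z₁ (-1))) = 0 := by
    apply Finset.sum_eq_zero
    intro i hi
    have hi' : i < k-p := Finset.mem_range.mp hi
    rw [(hz₁b i (by omega)).2, (hz₁b i (by omega)).1]
    ring
  rw [hsE, zero_add] at hE0
  rw [int_comm (iteratedDeriv (k-p+2) z₂) (iteratedDeriv (k-p) z₁)] at hE0
  -- equation (1)
  have h1 := lop_pair p k Λ hz₁s (contD hz₂s 2) hz₁L
  -- equation (2)
  have h2 := lop_pair p (k+1) Λ hz₂s hz₁s.continuous hz₂L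
  have ea : 2*(k+1) = 2*k+2 := by omega
  have eb : 2*(k+1) - 2*p = 2*k+2-2*p := by omega
  have ec : k+1-p = (k-p)+1 := by omega
  rw [eb, ea, ec] at h2
  -- combine
  have hk : k = k-1+1 := by omega
  have es : (-1:ℝ)^k = (-1:ℝ)^(k-1) * (-1) := by
    conv_lhs => rw [hk, pow_succ]
  have hk1 : k+1 = k-1+1+1 := by omega
  have es1 : (-1:ℝ)^(k+1) = (-1:ℝ)^(k-1) * (-1) * (-1) := by
    conv_lhs => rw [hk1, pow_succ, pow_succ]
  have er1 : (-1:ℝ)^(k-p+1) = (-1:ℝ)^(k-p) * (-1) := pow_succ _ _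
  have hev1 : iteratedDeriv k z₁ (-1) = (-1:ℝ)^k * iteratedDeriv k z₁ 1 := evenD hz₁e k
  have hev2 : iteratedDeriv (k+1) z₂ (-1) = (-1:ℝ)^(k+1) * iteratedDeriv (k+1) z₂ 1 :=
    evenD hz₂e (k+1)
  rw [hev1, hev2] at hA0
  rw [es, es1] at hA0
  rw [es] at h1 hC0
  rw [es1, er1] at h2
  rw [hA0, hB0] at h1
  rw [hC0, hE0] at h2
  set P := (-1:ℝ)^(k-1) with hP
  set Q := (-1:ℝ)^(k-p) with hQ
  set a := iteratedDeriv k z₁ 1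
  set b := iteratedDeriv (k+1) z₂ 1
  have ht2 : P * P = 1 := by rw [hP, ← mul_pow]; norm_num
  linear_combination (-(1:ℝ)/2) * h1 + (-(1:ℝ)/2) * h2
    + (-(a*b*(P*P+2))/2) * ht2

lemma Dxz_fun {z : ℝ → ℝ} (hz : ContDiff ℝ (⊤:ℕ∞) z) (i : ℕ) :
    iteratedDeriv i (fun y => y * deriv z y)
      = fun x => x * iteratedDeriv (i+1) z x + (i:ℝ) * iteratedDeriv i z x := by
  induction i with
  | zero =>
    funext x
    simp [iteratedDeriv_zero, iteratedDeriv_one]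
  | succ i ih =>
    funext x
    rw [iteratedDeriv_succ, ih]
    have h1 : HasDerivAt (fun x => x * iteratedDeriv (i+1) z x + (i:ℝ) * iteratedDeriv i z x)
        (x * iteratedDeriv (i+1+1) z x + ((i:ℝ)+1) * iteratedDeriv (i+1) z x) x := by
      have ha := (hasDerivAt_id x).mul (hasD hz (i+1) x)
      have hb := (hasD hz i x).const_mul (i:ℝ)
      have hc := ha.add hb
      exact hc.congr_deriv (by simp only [id_eq]; ring)
    rw [h1.deriv]
    push_cast
    ring

lemma int_xgg {g : ℝ → ℝ} (hg : ContDiff ℝ (⊤:ℕ∞) g) :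
    ∫ x in (-1:ℝ)..1, x * g x * deriv g x
      = (g 1 * g 1)/2 + (g (-1) * g (-1))/2 - (1/2) * ∫ x in (-1:ℝ)..1, g x * g x := by
  have hF : ∀ x ∈ Set.uIcc (-1:ℝ) 1, HasDerivAt (fun y => y * (g y * g y) / 2)
      (g x * g x / 2 + x * g x * deriv g x) x := by
    intro x _
    have hd := ((hg.differentiable (by simp)) x).hasDerivAt
    have hc := ((hasDerivAt_id x).mul (hd.mul hd)).div_const 2
    exact hc.congr_deriv (by simp only [id_eq, Pi.mul_apply]; ring)
  have hint : IntervalIntegrable (fun x => g x * g x / 2 + x * g x * deriv g x)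
      MeasureTheory.volume (-1) 1 :=
    (((hg.continuous.mul hg.continuous).div_const 2).add
      ((continuous_id.mul hg.continuous).mul (smooth_deriv hg).continuous)).intervalIntegrable _ _
  have h := integral_eq_sub_of_hasDerivAt hF hint
  have hsplit : ∫ x in (-1:ℝ)..1, (g x * g x / 2 + x * g x * deriv g x)
      = (∫ x in (-1:ℝ)..1, g x * g x / 2) + ∫ x in (-1:ℝ)..1, x * g x * deriv g x :=
    integral_add (((hg.continuous.mul hg.continuous).div_const 2).intervalIntegrable _ _)
      (((continuous_id.mul hg.continuous).mul (smooth_deriv hg).continuous).intervalIntegrable _ _)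
  have hhalf : ∫ x in (-1:ℝ)..1, g x * g x / 2
      = (1/2) * ∫ x in (-1:ℝ)..1, g x * g x := by
    rw [show (fun x => g x * g x / 2) = fun x => (1/2) * (g x * g x) from funext fun x => by ring]
    exact integral_const_mul _ _
  rw [hsplit, hhalf] at h
  linarith

lemma key (p m : ℕ) (hp : 1 ≤ p) (hpm : p ≤ m) (Λ : ℝ) (hΛ : 0 < Λ) {z : ℝ → ℝ}
    (hz : EvenEig p m Λ z) : iteratedDeriv m z 1 ≠ 0 := by
  obtain ⟨⟨hzs', hzb⟩, hnz, hze, hzL⟩ := hz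
  have hzs : ContDiff ℝ (⊤:ℕ∞) z := hzs'.of_le (by simp)
  have e2m : m + m = 2*m := by omega
  have e2mp : m - p + (m - p) = 2*m - 2*p := by omega
  -- Rayleigh
  have hr1 := ibp_master (smoothD hzs m) hzs m
  simp only [DD] at hr1
  rw [e2m] at hr1
  have hs1 : (∑ i ∈ Finset.range m, (-1:ℝ)^i *
        (iteratedDeriv (m-1-i+m) z 1 * iteratedDeriv i z 1
          - iteratedDeriv (m-1-i+m) z (-1) * iteratedDeriv i z (-1))) = 0 := by
    apply Finset.sum_eq_zero
    intro i hi
    have hi' : i < m := Finset.mem_range.mp hi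
    rw [(hzb i hi').1, (hzb i hi').2]; ring
  rw [hs1, zero_add] at hr1
  have hr2 := ibp_master (smoothD hzs (m-p)) hzs (m-p)
  simp only [DD] at hr2
  rw [e2mp] at hr2
  have hs2 : (∑ i ∈ Finset.range (m-p), (-1:ℝ)^i *
        (iteratedDeriv (m-p-1-i+(m-p)) z 1 * iteratedDeriv i z 1
          - iteratedDeriv (m-p-1-i+(m-p)) z (-1) * iteratedDeriv i z (-1))) = 0 := by
    apply Finset.sum_eq_zero
    intro i hi
    have hi' : i < m-p := Finset.mem_range.mp hi
    rw [(hzb i (by omega)).1, (hzb i (by omega)).2]; ring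
  rw [hs2, zero_add] at hr2
  have hR := lop_pair p m Λ hzs hzs.continuous hzL
  rw [hr1, hr2] at hR
  have hm2 : (-1:ℝ)^m * (-1:ℝ)^m = 1 := by rw [← mul_pow]; norm_num
  have hmp2 : (-1:ℝ)^(m-p) * (-1:ℝ)^(m-p) = 1 := by rw [← mul_pow]; norm_num
  set A := ∫ x in (-1:ℝ)..1, iteratedDeriv m z x * iteratedDeriv m z x with hA
  set B := ∫ x in (-1:ℝ)..1, iteratedDeriv (m-p) z x * iteratedDeriv (m-p) z x with hB
  have hAB : A = Λ * B := by
    linear_combination hR - A * hm2 + Λ * B * hmp2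
  -- Pohozaev
  have hv : ContDiff ℝ (⊤:ℕ∞) (fun y => y * deriv z y) :=
    contDiff_id.mul (smooth_deriv hzs)
  have hp1 := ibp_master (smoothD hzs m) hv m
  simp only [DD, Dxz_fun hzs] at hp1
  rw [e2m] at hp1
  have hsp1 : (∑ i ∈ Finset.range m, (-1:ℝ)^i *
        (iteratedDeriv (m-1-i+m) z 1 * (1 * iteratedDeriv (i+1) z 1 + (i:ℝ) * iteratedDeriv i z 1)
          - iteratedDeriv (m-1-i+m) z (-1) *
            ((-1) * iteratedDeriv (i+1) z (-1) + (i:ℝ) * iteratedDeriv i z (-1))))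
      = (-1:ℝ)^(m-1) * (iteratedDeriv m z 1 * iteratedDeriv m z 1
          + iteratedDeriv m z (-1) * iteratedDeriv m z (-1)) := by
    rw [Finset.sum_eq_single_of_mem (m-1) (Finset.mem_range.mpr (by omega))]
    · have e1 : m-1-(m-1)+m = m := by omega
      have e2 : m-1+1 = m := by omega
      rw [e1, e2, (hzb (m-1) (by omega)).1, (hzb (m-1) (by omega)).2]
      ring
    · intro i hi hne
      have hi' : i < m := Finset.mem_range.mp hi
      rw [(hzb i hi').1, (hzb i hi').2, (hzb (i+1) (by omega)).1, (hzb (i+1) (by omega)).2]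
      ring
  rw [hsp1] at hp1
  have hmid1 : ∫ x in (-1:ℝ)..1, iteratedDeriv m z x *
        (x * iteratedDeriv (m+1) z x + (m:ℝ) * iteratedDeriv m z x)
      = (∫ x in (-1:ℝ)..1, x * iteratedDeriv m z x * iteratedDeriv (m+1) z x) + (m:ℝ) * A := by
    rw [show (fun x => iteratedDeriv m z x *
          (x * iteratedDeriv (m+1) z x + (m:ℝ) * iteratedDeriv m z x))
        = fun x => x * iteratedDeriv m z x * iteratedDeriv (m+1) z x
            + (m:ℝ) * (iteratedDeriv m z x * iteratedDeriv m z x) from funext fun x => by ring]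
    have c1 : Continuous (fun x : ℝ => x * iteratedDeriv m z x * iteratedDeriv (m+1) z x) :=
      (continuous_id.mul (contD hzs m)).mul (contD hzs (m+1))
    have c2 : Continuous (fun x : ℝ => (m:ℝ) * (iteratedDeriv m z x * iteratedDeriv m z x)) :=
      continuous_const.mul ((contD hzs m).mul (contD hzs m))
    rw [integral_add (c1.intervalIntegrable _ _) (c2.intervalIntegrable _ _),
      integral_const_mul]
  have hxg1 := int_xgg (smoothD hzs m)
  rw [← iteratedDeriv_succ] at hxg1
  rw [hmid1, hxg1] at hp1
  -- hp1 is now the full q = m identity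
  have hp2 := ibp_master (smoothD hzs (m-p)) hv (m-p)
  simp only [DD, Dxz_fun hzs] at hp2
  rw [e2mp] at hp2
  have hsp2 : (∑ i ∈ Finset.range (m-p), (-1:ℝ)^i *
        (iteratedDeriv (m-p-1-i+(m-p)) z 1 * (1 * iteratedDeriv (i+1) z 1 + (i:ℝ) * iteratedDeriv i z 1)
          - iteratedDeriv (m-p-1-i+(m-p)) z (-1) *
            ((-1) * iteratedDeriv (i+1) z (-1) + (i:ℝ) * iteratedDeriv i z (-1)))) = 0 := by
    apply Finset.sum_eq_zero
    intro i hi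
    have hi' : i < m-p := Finset.mem_range.mp hi
    rw [(hzb i (by omega)).1, (hzb i (by omega)).2,
      (hzb (i+1) (by omega)).1, (hzb (i+1) (by omega)).2]
    ring
  rw [hsp2, zero_add] at hp2
  have hmid2 : ∫ x in (-1:ℝ)..1, iteratedDeriv (m-p) z x *
        (x * iteratedDeriv (m-p+1) z x + ((m-p:ℕ):ℝ) * iteratedDeriv (m-p) z x)
      = (∫ x in (-1:ℝ)..1, x * iteratedDeriv (m-p) z x * iteratedDeriv (m-p+1) z x)
          + ((m-p:ℕ):ℝ) * B := by
    rw [show (fun x => iteratedDeriv (m-p) z x *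
          (x * iteratedDeriv (m-p+1) z x + ((m-p:ℕ):ℝ) * iteratedDeriv (m-p) z x))
        = fun x => x * iteratedDeriv (m-p) z x * iteratedDeriv (m-p+1) z x
            + ((m-p:ℕ):ℝ) * (iteratedDeriv (m-p) z x * iteratedDeriv (m-p) z x) from
        funext fun x => by ring]
    have c1 : Continuous (fun x : ℝ => x * iteratedDeriv (m-p) z x * iteratedDeriv (m-p+1) z x) :=
      (continuous_id.mul (contD hzs (m-p))).mul (contD hzs (m-p+1))
    have c2 : Continuous (fun x : ℝ => ((m-p:ℕ):ℝ) * (iteratedDeriv (m-p) z x * iteratedDeriv (m-p) z x)) :=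
      continuous_const.mul ((contD hzs (m-p)).mul (contD hzs (m-p)))
    rw [integral_add (c1.intervalIntegrable _ _) (c2.intervalIntegrable _ _),
      integral_const_mul]
  have hxg2 := int_xgg (smoothD hzs (m-p))
  rw [← iteratedDeriv_succ] at hxg2
  rw [hmid2, hxg2] at hp2
  rw [(hzb (m-p) (by omega)).1, (hzb (m-p) (by omega)).2] at hp2
  have hP := lop_pair p m Λ hzs hv.continuous hzL
  rw [hp1, hp2] at hP
  -- final algebra
  have hme : m = m-1+1 := by omega
  have hesm : (-1:ℝ)^m = (-1:ℝ)^(m-1) * (-1) := by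
    conv_lhs => rw [hme, pow_succ]
  have hevm : iteratedDeriv m z (-1) = (-1:ℝ)^m * iteratedDeriv m z 1 := evenD hze m
  rw [hevm, hesm] at hP
  have ht2 : (-1:ℝ)^(m-1) * (-1:ℝ)^(m-1) = 1 := by rw [← mul_pow]; norm_num
  have hcast : ((m-p:ℕ):ℝ) = (m:ℝ) - (p:ℝ) := by
    push_cast [Nat.cast_sub hpm]; ring
  set S := iteratedDeriv m z 1 with hSd
  have hS2 : S * S = (p:ℝ) * Λ * B := by
    set t := (-1:ℝ)^(m-1) with htd
    set q := (-1:ℝ)^(m-p) with hqd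
    linear_combination (-1 : ℝ) * hP
      + ((m:ℝ)*A - A/2 - S*S - 2*S*S*(t*t) - (t*t)*(S*S)/2 - (S*S)/2
          + S*S*(2*(t*t) + 1/2)) * ht2
      + (Λ*B/2 - Λ*((m-p:ℕ):ℝ)*B) * hmp2
      + ((m:ℝ) - 1/2) * hAB - Λ*B*hcast
  intro hS0
  have hB0 : B = 0 := by
    have h0 : (p:ℝ) * Λ * B = 0 := by rw [← hS2, hS0]; ring
    have hpΛ : (p:ℝ) * Λ ≠ 0 := by positivity
    rcases mul_eq_zero.mp h0 with h | h
    · exact absurd h hpΛ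
    · exact h
  have hg0 : ∀ x ∈ Icc (-1:ℝ) 1, iteratedDeriv (m-p) z x = 0 :=
    sq_int_zero (contD hzs (m-p)) (by rw [← hB]; exact hB0)
  have hdown : ∀ j : ℕ, j ≤ m - p → ∀ x ∈ Icc (-1:ℝ) 1, iteratedDeriv (m-p-j) z x = 0 := by
    intro j
    induction j with
    | zero => intro _; simpa using hg0
    | succ j ih =>
      intro hj
      have hprev := ih (by omega)
      have heq : m-p-j = (m-p-(j+1))+1 := by omega
      rw [heq] at hprev
      exact downto_zero hzs (m-p-(j+1)) hprev (hzb (m-p-(j+1)) (by omega)).2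
  have hz0 : ∀ x ∈ Icc (-1:ℝ) 1, z x = 0 := by
    have h := hdown (m-p) le_rfl
    simpa [Nat.sub_self, iteratedDeriv_zero] using h
  obtain ⟨x0, hx0, hx0ne⟩ := hnz
  exact hx0ne (hz0 x0 hx0)

theorem stmt8 (p n : ℕ) (hp : 1 ≤ p) (hpn : p < n) (h : p ≤ n - 1)
    (Λ₁ Λ₂ : ℝ) (hΛ₁ : 0 < Λ₁) (hΛ₂ : 0 < Λ₂) (z₁ z₂ : ℝ → ℝ)
    (hz₁ : EvenEig p (n - 1) Λ₁ z₁) (hz₂ : EvenEig p n Λ₂ z₂) :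
    Λ₁ ≠ Λ₂ := by
  intro heq
  have hk : n - 1 + 1 = n := by omega
  have hz₂' : EvenEig p (n - 1 + 1) Λ₁ z₂ := by rw [hk, heq]; exact hz₂
  have hcross := cross p (n-1) hp h Λ₁ hz₁ hz₂'
  rcases mul_eq_zero.mp hcross with h0 | h0
  · exact key p (n-1) hp h Λ₁ hΛ₁ hz₁ h0
  · rw [hk] at h0
    exact key p n hp (by omega) Λ₂ hΛ₂ hz₂ h0
end
end

section
/- Let Λ > 0. If z₁ and z₂ are both even eigenfunctions at level n with the same eigenvalue Λ, then z₁ and z₂ are linearly dependent as functions on [−1,1], i.e. there exist real numbers α, β, not both zero, with α·z₁ + β·z₂ = 0 on [−1,1]. -/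
noncomputable section

open intervalIntegral MeasureTheory Set
open scoped ContDiff

namespace Stmt10Aux

variable {w : ℝ → ℝ}

lemma cD (hw : ContDiff ℝ ∞ w) (j : ℕ) : ContDiff ℝ ∞ (iteratedDeriv j w) := by
  rw [iteratedDeriv_eq_iterate]; exact ContDiff.iterate_deriv j hw

lemma contD (hw : ContDiff ℝ ∞ w) (j : ℕ) : Continuous (iteratedDeriv j w) :=
  (cD hw j).continuous

lemma hda (hw : ContDiff ℝ ∞ w) (j : ℕ) (x : ℝ) :
    HasDerivAt (iteratedDeriv j w) (iteratedDeriv (j+1) w x) x := by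
  rw [iteratedDeriv_succ]
  exact ((cD hw j).differentiable (by simp)).differentiableAt.hasDerivAt

lemma intg (hw : ContDiff ℝ ∞ w) (a b : ℕ) :
    IntervalIntegrable (fun x => iteratedDeriv a w x * iteratedDeriv b w x) volume (-1) 1 :=
  ((contD hw a).mul (contD hw b)).intervalIntegrable _ _

lemma step (hw : ContDiff ℝ ∞ w) (a b : ℕ) (h2 : iteratedDeriv b w (-1) = 0)
    (h1 : iteratedDeriv b w 1 = 0) :
    ∫ x in (-1:ℝ)..1, iteratedDeriv (a+1) w x * iteratedDeriv b w x
      = - ∫ x in (-1:ℝ)..1, iteratedDeriv a w x * iteratedDeriv (b+1) w x := by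
  have H := intervalIntegral.integral_mul_deriv_eq_deriv_mul
    (a := (-1:ℝ)) (b := (1:ℝ))
    (u := iteratedDeriv b w) (u' := iteratedDeriv (b+1) w)
    (v := iteratedDeriv a w) (v' := iteratedDeriv (a+1) w)
    (fun x _ => hda hw b x) (fun x _ => hda hw a x)
    ((contD hw (b+1)).intervalIntegrable _ _) ((contD hw (a+1)).intervalIntegrable _ _)
  rw [h1, h2] at H
  simp only [zero_mul, sub_zero, zero_sub] at H
  calc ∫ x in (-1:ℝ)..1, iteratedDeriv (a+1) w x * iteratedDeriv b w x
      = ∫ x in (-1:ℝ)..1, iteratedDeriv b w x * iteratedDeriv (a+1) w x :=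
        intervalIntegral.integral_congr (fun x _ => mul_comm _ _)
    _ = - ∫ x in (-1:ℝ)..1, iteratedDeriv (b+1) w x * iteratedDeriv a w x := H
    _ = - ∫ x in (-1:ℝ)..1, iteratedDeriv a w x * iteratedDeriv (b+1) w x := by
        rw [intervalIntegral.integral_congr (fun x _ => mul_comm _ _)]

lemma shift (hw : ContDiff ℝ ∞ w) :
    ∀ (s a b : ℕ),
      (∀ t, t < s → iteratedDeriv (b+t) w (-1) = 0 ∧ iteratedDeriv (b+t) w 1 = 0) →
      ∫ x in (-1:ℝ)..1, iteratedDeriv (a+s) w x * iteratedDeriv b w x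
        = (-1:ℝ)^s * ∫ x in (-1:ℝ)..1, iteratedDeriv a w x * iteratedDeriv (b+s) w x := by
  intro s
  induction s with
  | zero => intro a b _; simp
  | succ s ih =>
    intro a b hb
    have e1 : a + (s+1) = (a+s) + 1 := by omega
    rw [e1, step hw (a+s) b (hb 0 (by omega)).1 (hb 0 (by omega)).2]
    have e2 : ∀ t, t < s → iteratedDeriv ((b+1)+t) w (-1) = 0 ∧ iteratedDeriv ((b+1)+t) w 1 = 0 := by
      intro t ht
      have : (b+1)+t = b + (t+1) := by omega
      rw [this]; exact hb (t+1) (by omega)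
    rw [ih a (b+1) e2]
    have e3 : b + 1 + s = b + (s+1) := by omega
    rw [e3]; ring

/-- `II w k = ∫ (w^{(k)})²` over `[-1,1]`. -/
def II (w : ℝ → ℝ) (k : ℕ) : ℝ :=
  ∫ x in (-1:ℝ)..1, iteratedDeriv k w x * iteratedDeriv k w x

lemma II_nonneg (w : ℝ → ℝ) (k : ℕ) : 0 ≤ II w k :=
  intervalIntegral.integral_nonneg (by norm_num) (fun x _ => mul_self_nonneg _)

/-- continuous, ∫ g² = 0 on [-1,1] ⇒ g = 0 on [-1,1]. -/
lemma vanish {g : ℝ → ℝ} (hg : Continuous g)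
    (h : (∫ x in (-1:ℝ)..1, g x * g x) = 0) : ∀ x ∈ Icc (-1:ℝ) 1, g x = 0 := by
  by_contra hc
  push_neg at hc
  obtain ⟨x₀, hx₀, hne⟩ := hc
  have hU : IsOpen {x : ℝ | g x ≠ 0} := isOpen_compl_singleton.preimage hg
  have hcl : x₀ ∈ closure (Ioo (-1:ℝ) 1) := by
    rw [closure_Ioo (by norm_num : (-1:ℝ) ≠ 1)]; exact hx₀
  have hV : ({x : ℝ | g x ≠ 0} ∩ Ioo (-1:ℝ) 1).Nonempty :=
    _root_.mem_closure_iff.mp hcl _ hU hne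
  have hVpos : 0 < volume ({x : ℝ | g x ≠ 0} ∩ Ioo (-1:ℝ) 1) :=
    (hU.inter isOpen_Ioo).measure_pos volume hV
  have hmono : {x : ℝ | g x ≠ 0} ∩ Ioo (-1:ℝ) 1
      ⊆ Function.support (fun x => g x * g x) ∩ Ioc (-1:ℝ) 1 := by
    rintro x ⟨hx1, hx2⟩
    exact ⟨mul_ne_zero hx1 hx1, Ioo_subset_Ioc_self hx2⟩
  have hint : IntervalIntegrable (fun x => g x * g x) volume (-1) 1 :=
    (hg.mul hg).intervalIntegrable _ _
  have := (intervalIntegral.integral_pos_iff_support_of_nonneg_ae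
    (Filter.Eventually.of_forall (fun x => mul_self_nonneg (g x))) hint).mpr
    ⟨by norm_num, lt_of_lt_of_le hVpos (measure_mono hmono)⟩
  linarith [this, h.le, h.ge]

lemma descend_one (hw : ContDiff ℝ ∞ w) (m : ℕ) (hbm : iteratedDeriv m w (-1) = 0)
    (h : ∀ x ∈ Icc (-1:ℝ) 1, iteratedDeriv (m+1) w x = 0) :
    ∀ x ∈ Icc (-1:ℝ) 1, iteratedDeriv m w x = 0 := by
  have hc := constant_of_has_deriv_right_zero (f := iteratedDeriv m w) (a := (-1:ℝ)) (b := 1)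
    ((contD hw m).continuousOn)
    (fun x hx => by
      have h0 : iteratedDeriv (m+1) w x = 0 := h x (Ico_subset_Icc_self hx)
      have := hda hw m x
      rw [h0] at this
      exact this.hasDerivWithinAt)
  intro x hx
  rw [hc x hx, hbm]

lemma descend (hw : ContDiff ℝ ∞ w) (n : ℕ)
    (hbc : ∀ j, j ≤ n → iteratedDeriv j w (-1) = 0) :
    ∀ m, m ≤ n + 1 → (∀ x ∈ Icc (-1:ℝ) 1, iteratedDeriv m w x = 0) →
      ∀ x ∈ Icc (-1:ℝ) 1, w x = 0 := by
  intro m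
  induction m with
  | zero => intro _ h x hx; simpa using h x hx
  | succ m ih =>
    intro hm h
    exact ih (by omega) (descend_one hw m (hbc m (by omega)) h)

lemma expand (hw : ContDiff ℝ ∞ w) (aa bb : ℕ) (t : ℝ) :
    (∫ x in (-1:ℝ)..1, (iteratedDeriv aa w x + t * iteratedDeriv bb w x)
        * (iteratedDeriv aa w x + t * iteratedDeriv bb w x))
      = II w aa + (2*t) * (∫ x in (-1:ℝ)..1, iteratedDeriv aa w x * iteratedDeriv bb w x)
        + t^2 * II w bb := by
  have e : (fun x => (iteratedDeriv aa w x + t * iteratedDeriv bb w x)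
        * (iteratedDeriv aa w x + t * iteratedDeriv bb w x))
      = fun x => (iteratedDeriv aa w x * iteratedDeriv aa w x)
        + ((2*t) * (iteratedDeriv aa w x * iteratedDeriv bb w x)
          + (t^2) * (iteratedDeriv bb w x * iteratedDeriv bb w x)) := by
    funext x; ring
  rw [e, intervalIntegral.integral_add (intg hw aa aa)
      (((intg hw aa bb).const_mul _).add ((intg hw bb bb).const_mul _)),
    intervalIntegral.integral_add ((intg hw aa bb).const_mul _) ((intg hw bb bb).const_mul _),
    intervalIntegral.integral_const_mul, intervalIntegral.integral_const_mul]
  simp only [II]; ring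

lemma neg_one_sq_pow (k : ℕ) : (-1:ℝ)^k * (-1:ℝ)^k = 1 := by
  rw [← pow_add]; exact Even.neg_one_pow ⟨k, by ring⟩

lemma cs (hw : ContDiff ℝ ∞ w) (m : ℕ) (hm2 : iteratedDeriv m w (-1) = 0)
    (hm1 : iteratedDeriv m w 1 = 0) (hpos : 0 < II w m) :
    II w (m+1)^2 ≤ II w m * II w (m+2) := by
  have hJ : (∫ x in (-1:ℝ)..1, iteratedDeriv (m+2) w x * iteratedDeriv m w x)
      = -II w (m+1) := by
    have := step hw (m+1) m hm2 hm1
    simpa [II] using this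
  set t : ℝ := II w (m+1) / II w m with ht
  have h0 : 0 ≤ II w (m+2) + (2*t) * (-II w (m+1)) + t^2 * II w m := by
    have he := expand hw (m+2) m t
    rw [hJ] at he
    calc (0:ℝ) ≤ ∫ x in (-1:ℝ)..1, (iteratedDeriv (m+2) w x + t * iteratedDeriv m w x)
        * (iteratedDeriv (m+2) w x + t * iteratedDeriv m w x) :=
          intervalIntegral.integral_nonneg (by norm_num) (fun x _ => mul_self_nonneg _)
      _ = _ := by rw [he]; try ring
  have hne : II w m ≠ 0 := ne_of_gt hpos
  have he2 : (II w (m+2) + (2*t) * (-II w (m+1)) + t^2 * II w m) * II w m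
      = II w m * II w (m+2) - II w (m+1)^2 := by
    rw [ht]; field_simp; ring
  nlinarith [mul_nonneg h0 hpos.le]

lemma hode_int {p n : ℕ} {Λ : ℝ} (hw : ContDiff ℝ ∞ w)
    (hode : ∀ x ∈ Icc (-1:ℝ) 1, Lop p n Λ w x = 0) (t : ℕ) :
    (-1:ℝ)^n * (∫ x in (-1:ℝ)..1, iteratedDeriv (2*n) w x * iteratedDeriv t w x)
      - (Λ * (-1:ℝ)^(n-p)) * (∫ x in (-1:ℝ)..1, iteratedDeriv (2*n-2*p) w x * iteratedDeriv t w x)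
      = 0 := by
  have e : (fun x => (-1:ℝ)^n * (iteratedDeriv (2*n) w x * iteratedDeriv t w x)
        - (Λ * (-1:ℝ)^(n-p)) * (iteratedDeriv (2*n-2*p) w x * iteratedDeriv t w x))
      = fun x => Lop p n Λ w x * iteratedDeriv t w x := by
    funext x; simp only [Lop]; ring
  have h1 : (∫ x in (-1:ℝ)..1, ((-1:ℝ)^n * (iteratedDeriv (2*n) w x * iteratedDeriv t w x)
      - (Λ * (-1:ℝ)^(n-p)) * (iteratedDeriv (2*n-2*p) w x * iteratedDeriv t w x))) = 0 := by
    rw [e]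
    rw [intervalIntegral.integral_congr (g := fun _ => (0:ℝ)) ?_]
    · exact intervalIntegral.integral_zero
    · intro x hx
      rw [uIcc_of_le (by norm_num : (-1:ℝ) ≤ 1)] at hx
      simp [hode x hx]
  rw [intervalIntegral.integral_sub ((intg hw _ _).const_mul _) ((intg hw _ _).const_mul _),
    intervalIntegral.integral_const_mul, intervalIntegral.integral_const_mul] at h1
  exact h1

lemma identA {p n : ℕ} {Λ : ℝ} (hp : 1 ≤ p) (hpn : p < n) (hw : ContDiff ℝ ∞ w)
    (hbc : ∀ j, j ≤ n → iteratedDeriv j w (-1) = 0 ∧ iteratedDeriv j w 1 = 0)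
    (hode : ∀ x ∈ Icc (-1:ℝ) 1, Lop p n Λ w x = 0) :
    II w n = Λ * II w (n-p) := by
  have h := hode_int (p := p) (n := n) (Λ := Λ) hw hode 0
  have s1 : (∫ x in (-1:ℝ)..1, iteratedDeriv (2*n) w x * iteratedDeriv 0 w x)
      = (-1:ℝ)^n * II w n := by
    rw [show 2*n = n + n from by ring]
    rw [shift hw n n 0 (fun t ht => by simpa using hbc t (by omega))]
    simp [II]
  have s2 : (∫ x in (-1:ℝ)..1, iteratedDeriv (2*n-2*p) w x * iteratedDeriv 0 w x)
      = (-1:ℝ)^(n-p) * II w (n-p) := by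
    rw [show 2*n-2*p = (n-p) + (n-p) from by omega]
    rw [shift hw (n-p) (n-p) 0 (fun t ht => by simpa using hbc t (by omega))]
    simp [II]
  rw [s1, s2] at h
  have e1 : (-1:ℝ)^n * ((-1:ℝ)^n * II w n) = II w n := by
    rw [← mul_assoc, neg_one_sq_pow, one_mul]
  have e2 : (Λ * (-1:ℝ)^(n-p)) * ((-1:ℝ)^(n-p) * II w (n-p)) = Λ * II w (n-p) := by
    calc (Λ * (-1:ℝ)^(n-p)) * ((-1:ℝ)^(n-p) * II w (n-p))
        = Λ * (((-1:ℝ)^(n-p) * (-1:ℝ)^(n-p)) * II w (n-p)) := by ring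
      _ = Λ * II w (n-p) := by rw [neg_one_sq_pow, one_mul]
  rw [e1, e2] at h
  linarith

lemma identB {p n : ℕ} {Λ : ℝ} (hp : 1 ≤ p) (hpn : p < n) (hw : ContDiff ℝ ∞ w)
    (hbc : ∀ j, j ≤ n → iteratedDeriv j w (-1) = 0 ∧ iteratedDeriv j w 1 = 0)
    (hode : ∀ x ∈ Icc (-1:ℝ) 1, Lop p n Λ w x = 0) :
    II w (n+1) = Λ * II w (n+1-p) := by
  have h := hode_int (p := p) (n := n) (Λ := Λ) hw hode 2
  have s1 : (∫ x in (-1:ℝ)..1, iteratedDeriv (2*n) w x * iteratedDeriv 2 w x)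
      = (-1:ℝ)^(n-1) * II w (n+1) := by
    rw [show 2*n = (n+1) + (n-1) from by omega]
    rw [shift hw (n-1) (n+1) 2 (fun t ht => by
      have e : 2 + t = 2 + t := rfl
      exact hbc (2+t) (by omega))]
    rw [show 2 + (n-1) = n+1 from by omega]
    simp [II]
  have s2 : (∫ x in (-1:ℝ)..1, iteratedDeriv (2*n-2*p) w x * iteratedDeriv 2 w x)
      = (-1:ℝ)^(n-p-1) * II w (n+1-p) := by
    rw [show 2*n-2*p = (n-p+1) + (n-p-1) from by omega]
    rw [shift hw (n-p-1) (n-p+1) 2 (fun t ht => hbc (2+t) (by omega))]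
    rw [show 2 + (n-p-1) = n+1-p from by omega, show n-p+1 = n+1-p from by omega]
    simp [II]
  rw [s1, s2] at h
  have o1 : (-1:ℝ)^n * (-1:ℝ)^(n-1) = -1 := by
    rw [← pow_add]; exact Odd.neg_one_pow ⟨n-1, by omega⟩
  have o2 : (-1:ℝ)^(n-p) * (-1:ℝ)^(n-p-1) = -1 := by
    rw [← pow_add]; exact Odd.neg_one_pow ⟨n-p-1, by omega⟩
  have e1 : (-1:ℝ)^n * ((-1:ℝ)^(n-1) * II w (n+1)) = - II w (n+1) := by
    rw [← mul_assoc, o1]; ring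
  have e2 : (Λ * (-1:ℝ)^(n-p)) * ((-1:ℝ)^(n-p-1) * II w (n+1-p)) = - (Λ * II w (n+1-p)) := by
    calc (Λ * (-1:ℝ)^(n-p)) * ((-1:ℝ)^(n-p-1) * II w (n+1-p))
        = Λ * (((-1:ℝ)^(n-p) * (-1:ℝ)^(n-p-1)) * II w (n+1-p)) := by ring
      _ = - (Λ * II w (n+1-p)) := by rw [o2]; ring
  rw [e1, e2] at h
  linarith

lemma key {p n : ℕ} (hp : 1 ≤ p) (hpn : p < n) {Λ : ℝ} (hw : ContDiff ℝ ∞ w)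
    (hbc : ∀ j, j ≤ n → iteratedDeriv j w (-1) = 0 ∧ iteratedDeriv j w 1 = 0)
    (hode : ∀ x ∈ Icc (-1:ℝ) 1, Lop p n Λ w x = 0) :
    ∀ x ∈ Icc (-1:ℝ) 1, w x = 0 := by
  have hbc' : ∀ j, j ≤ n → iteratedDeriv j w (-1) = 0 := fun j hj => (hbc j hj).1
  by_cases hzero : ∃ k, n - p ≤ k ∧ k ≤ n + 1 ∧ II w k = 0
  · obtain ⟨k, _, hk2, hk0⟩ := hzero
    exact descend hw n hbc' k hk2 (vanish (contD hw k) hk0)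
  · push_neg at hzero
    have hpos : ∀ k, n - p ≤ k → k ≤ n + 1 → 0 < II w k := fun k h1 h2 =>
      lt_of_le_of_ne (II_nonneg w k) (Ne.symm (hzero k h1 h2))
    have hA := identA hp hpn hw hbc hode
    have hB := identB hp hpn hw hbc hode
    have hcs : ∀ m, n - p ≤ m → m ≤ n - 1 → II w (m+1)^2 ≤ II w m * II w (m+2) :=
      fun m h1 h2 => cs hw m (hbc m (by omega)).1 (hbc m (by omega)).2 (hpos m h1 (by omega))
    have heq : II w n ^ 2 = II w (n-1) * II w (n+1) := by
      have hle : II w n ^2 ≤ II w (n-1) * II w (n+1) := by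
        have := hcs (n-1) (by omega) (by omega)
        rwa [show n-1+1 = n from by omega, show n-1+2 = n+1 from by omega] at this
      rcases eq_or_lt_of_le hle with h | hlt
      · exact h
      · exfalso
        have chain : ∀ q, 1 ≤ q → q ≤ p → II w n * II w (n+1-q) < II w (n+1) * II w (n-q) := by
          intro q
          induction q with
          | zero => omega
          | succ q ih =>
            intro hq1 hqp
            rcases Nat.lt_or_ge 0 q with h1 | h1
            · have IH := ih (by omega) (by omega)
              have hcsq : II w (n-q)^2 ≤ II w (n-q-1) * II w (n-q+1) := by
                have := hcs (n-q-1) (by omega) (by omega)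
                rwa [show n-q-1+1 = n-q from by omega, show n-q-1+2 = n-q+1 from by omega] at this
              have hu : 0 < II w (n-q-1) := hpos _ (by omega) (by omega)
              have hv : 0 < II w (n-q) := hpos _ (by omega) (by omega)
              have hxx : 0 < II w (n-q+1) := hpos _ (by omega) (by omega)
              have hAn : 0 < II w n := hpos _ (by omega) (by omega)
              rw [show n+1-(q+1) = n-q from by omega, show n-(q+1) = n-q-1 from by omega]
              have IH' : II w n * II w (n-q+1) < II w (n+1) * II w (n-q) := by
                rwa [show n+1-q = n-q+1 from by omega] at IH
              have h3 : (II w n * II w (n-q)) * II w (n-q)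
                  < (II w (n+1) * II w (n-q-1)) * II w (n-q) := by
                nlinarith [mul_le_mul_of_nonneg_left hcsq hAn.le,
                  mul_lt_mul_of_pos_right IH' hu]
              exact lt_of_mul_lt_mul_right h3 hv.le
            · have hq0 : q = 0 := by omega
              subst hq0
              rw [show n+1-1 = n from by omega]
              nlinarith [hlt]
        have hfin := chain p hp le_rfl
        rw [hA, hB] at hfin
        nlinarith [hfin]
    have hn1 : 0 < II w (n-1) := hpos _ (by omega) (by omega)
    have hnn : 0 < II w n := hpos _ (by omega) (by omega)
    set t : ℝ := II w n / II w (n-1) with ht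
    have htpos : 0 < t := div_pos hnn hn1
    have h1 : t * II w (n-1) = II w n := by
      rw [ht]; field_simp
    have hratio : II w (n+1) = t * II w n := by
      rw [ht]; rw [div_mul_eq_mul_div, eq_div_iff hn1.ne']
      linear_combination -heq
    have hJ : (∫ x in (-1:ℝ)..1, iteratedDeriv (n+1) w x * iteratedDeriv (n-1) w x)
        = - II w n := by
      have hs := step hw n (n-1) (hbc (n-1) (by omega)).1 (hbc (n-1) (by omega)).2
      rw [show n-1+1 = n from by omega] at hs
      simpa [II] using hs
    have hzero2 : (∫ x in (-1:ℝ)..1,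
        (iteratedDeriv (n+1) w x + t * iteratedDeriv (n-1) w x)
        * (iteratedDeriv (n+1) w x + t * iteratedDeriv (n-1) w x)) = 0 := by
      have he := expand hw (n+1) (n-1) t
      rw [hJ] at he
      rw [he, hratio]
      linear_combination t * h1
    have hgz : ∀ x ∈ Icc (-1:ℝ) 1,
        iteratedDeriv (n+1) w x + t * iteratedDeriv (n-1) w x = 0 :=
      vanish ((contD hw (n+1)).add (continuous_const.mul (contD hw (n-1)))) hzero2
    set E : ℝ → ℝ := fun x => iteratedDeriv n w x * iteratedDeriv n w x
        + t * (iteratedDeriv (n-1) w x * iteratedDeriv (n-1) w x) with hE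
    have hEd : ∀ x, HasDerivAt E
        ((iteratedDeriv (n+1) w x * iteratedDeriv n w x
            + iteratedDeriv n w x * iteratedDeriv (n+1) w x)
          + t * (iteratedDeriv n w x * iteratedDeriv (n-1) w x
            + iteratedDeriv (n-1) w x * iteratedDeriv n w x)) x := by
      intro x
      have hd1 := (hda hw n x).mul (hda hw n x)
      have hd0 := hda hw (n-1) x
      rw [show n-1+1 = n from by omega] at hd0
      have hd2 := (hd0.mul hd0).const_mul t
      exact hd1.add hd2
    have hE0 : ∀ x ∈ Icc (-1:ℝ) 1, E x = 0 := by
      have hc : ContinuousOn E (Icc (-1:ℝ) 1) :=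
        (((contD hw n).mul (contD hw n)).add
          (continuous_const.mul ((contD hw (n-1)).mul (contD hw (n-1))))).continuousOn
      have hconst := constant_of_has_deriv_right_zero (f := E) (a := (-1:ℝ)) (b := 1) hc
        (fun x hx => by
          have hg := hgz x (Ico_subset_Icc_self hx)
          have hD := hEd x
          have hz : (iteratedDeriv (n+1) w x * iteratedDeriv n w x
              + iteratedDeriv n w x * iteratedDeriv (n+1) w x)
            + t * (iteratedDeriv n w x * iteratedDeriv (n-1) w x
              + iteratedDeriv (n-1) w x * iteratedDeriv n w x) = 0 := by
            have : iteratedDeriv (n+1) w x = - (t * iteratedDeriv (n-1) w x) := by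
              linarith [hg]
            rw [this]; ring
          rw [hz] at hD
          exact hD.hasDerivWithinAt)
      intro x hx
      rw [hconst x hx]
      simp only [hE]
      rw [(hbc n le_rfl).1, (hbc (n-1) (by omega)).1]
      ring
    have hfn1 : ∀ x ∈ Icc (-1:ℝ) 1, iteratedDeriv (n-1) w x = 0 := by
      intro x hx
      have hEx := hE0 x hx
      simp only [hE] at hEx
      have hb2 : iteratedDeriv (n-1) w x * iteratedDeriv (n-1) w x = 0 := by
        have hle : t * (iteratedDeriv (n-1) w x * iteratedDeriv (n-1) w x) ≤ 0 := by
          nlinarith [mul_self_nonneg (iteratedDeriv n w x)]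
        have hle2 : iteratedDeriv (n-1) w x * iteratedDeriv (n-1) w x ≤ 0 := by
          nlinarith [hle, htpos]
        exact le_antisymm hle2 (mul_self_nonneg _)
      exact mul_self_eq_zero.mp hb2
    exact descend hw n hbc' (n-1) (by omega) hfn1

lemma even_iter (z : ℝ → ℝ) (he : ∀ x, z (-x) = z x) (j : ℕ) (x : ℝ) :
    iteratedDeriv j z (-x) = (-1:ℝ)^j * iteratedDeriv j z x := by
  have hc := iteratedDeriv_comp_neg j z x
  have hz : (fun y => z (-y)) = z := funext he
  rw [hz, smul_eq_mul] at hc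
  -- hc : iteratedDeriv j z x = (-1)^j * iteratedDeriv j z (-x)
  calc iteratedDeriv j z (-x) = 1 * iteratedDeriv j z (-x) := (one_mul _).symm
    _ = ((-1:ℝ)^j * (-1:ℝ)^j) * iteratedDeriv j z (-x) := by rw [neg_one_sq_pow]
    _ = (-1:ℝ)^j * ((-1:ℝ)^j * iteratedDeriv j z (-x)) := by ring
    _ = (-1:ℝ)^j * iteratedDeriv j z x := by rw [← hc]

lemma iter_comb (c₁ c₂ : ℝ) (z₁ z₂ : ℝ → ℝ) (h₁ : ContDiff ℝ ∞ z₁) (h₂ : ContDiff ℝ ∞ z₂)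
    (j : ℕ) (x : ℝ) :
    iteratedDeriv j (fun y => c₁ * z₁ y + c₂ * z₂ y) x
      = c₁ * iteratedDeriv j z₁ x + c₂ * iteratedDeriv j z₂ x := by
  have hx : x ∈ (univ : Set ℝ) := mem_univ x
  have hu : UniqueDiffOn ℝ (univ : Set ℝ) := uniqueDiffOn_univ
  have hle : ((j : ℕ∞) : WithTop ℕ∞) ≤ ∞ := by exact_mod_cast le_top
  have hc₁ : ContDiffOn ℝ j (fun y => c₁ * z₁ y) univ :=
    ((contDiff_const.mul h₁).of_le hle).contDiffOn
  have hc₂ : ContDiffOn ℝ j (fun y => c₂ * z₂ y) univ :=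
    ((contDiff_const.mul h₂).of_le hle).contDiffOn
  have e : (fun y => c₁ * z₁ y + c₂ * z₂ y)
      = (fun y => c₁ * z₁ y) + (fun y => c₂ * z₂ y) := rfl
  rw [← iteratedDerivWithin_univ, e, iteratedDerivWithin_add hx hu (hc₁ x hx) (hc₂ x hx),
    iteratedDerivWithin_const_mul hx hu c₁ ((h₁.of_le hle).contDiffOn x hx),
    iteratedDerivWithin_const_mul hx hu c₂ ((h₂.of_le hle).contDiffOn x hx),
    iteratedDerivWithin_univ, iteratedDerivWithin_univ]

end Stmt10Aux

open Stmt10Aux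

theorem stmt10 (p n : ℕ) (hp : 1 ≤ p) (hpn : p < n)
    (Λ : ℝ) (hΛ : 0 < Λ) (z₁ z₂ : ℝ → ℝ)
    (hz₁ : EvenEig p n Λ z₁) (hz₂ : EvenEig p n Λ z₂) :
    ∃ α β : ℝ, (α ≠ 0 ∨ β ≠ 0) ∧
      ∀ x ∈ Set.Icc (-1:ℝ) 1, α * z₁ x + β * z₂ x = 0 := by
  obtain ⟨⟨hz₁s, hz₁b⟩, hz₁nz, hz₁e, hz₁o⟩ := hz₁
  obtain ⟨⟨hz₂s, hz₂b⟩, hz₂nz, hz₂e, hz₂o⟩ := hz₂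
  have hs₁ : ContDiff ℝ ∞ z₁ := hz₁s.of_le (by simp)
  have hs₂ : ContDiff ℝ ∞ z₂ := hz₂s.of_le (by simp)
  by_cases hab : iteratedDeriv n z₁ 1 = 0 ∧ iteratedDeriv n z₂ 1 = 0
  · refine ⟨1, 0, Or.inl one_ne_zero, ?_⟩
    have hbc1 : ∀ j, j ≤ n → iteratedDeriv j z₁ (-1) = 0 ∧ iteratedDeriv j z₁ 1 = 0 := by
      intro j hj
      rcases Nat.lt_or_ge j n with h | h
      · exact hz₁b j h
      · have hjn : j = n := by omega
        subst hjn
        refine ⟨?_, hab.1⟩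
        have he := even_iter z₁ hz₁e j 1
        rw [he, hab.1]; ring
    have hkey := key hp hpn hs₁ hbc1 hz₁o
    intro x hx
    rw [hkey x hx]; ring
  · refine ⟨iteratedDeriv n z₂ 1, -(iteratedDeriv n z₁ 1), ?_, ?_⟩
    · rcases not_and_or.mp hab with h | h
      · exact Or.inr (neg_ne_zero.mpr h)
      · exact Or.inl h
    · set a := iteratedDeriv n z₁ 1 with ha
      set b := iteratedDeriv n z₂ 1 with hb
      have hWs : ContDiff ℝ ∞ (fun y => b * z₁ y + (-a) * z₂ y) :=
        (contDiff_const.mul hs₁).add (contDiff_const.mul hs₂)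
      have hlin : ∀ j x, iteratedDeriv j (fun y => b * z₁ y + (-a) * z₂ y) x
          = b * iteratedDeriv j z₁ x + (-a) * iteratedDeriv j z₂ x :=
        iter_comb b (-a) z₁ z₂ hs₁ hs₂
      have hbcW : ∀ j, j ≤ n →
          iteratedDeriv j (fun y => b * z₁ y + (-a) * z₂ y) (-1) = 0 ∧
          iteratedDeriv j (fun y => b * z₁ y + (-a) * z₂ y) 1 = 0 := by
        intro j hj
        rcases Nat.lt_or_ge j n with h | h
        · constructor
          · rw [hlin, (hz₁b j h).1, (hz₂b j h).1]; ring
          · rw [hlin, (hz₁b j h).2, (hz₂b j h).2]; ring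
        · have hjn : j = n := by omega
          subst hjn
          constructor
          · rw [hlin, even_iter z₁ hz₁e j 1, even_iter z₂ hz₂e j 1, ← ha, ← hb]; ring
          · rw [hlin, ← ha, ← hb]; ring
      have hodeW : ∀ x ∈ Set.Icc (-1:ℝ) 1,
          Lop p n Λ (fun y => b * z₁ y + (-a) * z₂ y) x = 0 := by
        intro x hx
        have o1 := hz₁o x hx
        have o2 := hz₂o x hx
        simp only [Lop] at o1 o2 ⊢
        rw [hlin, hlin]
        linear_combination b * o1 + (-a) * o2
      have hkey := key hp hpn hWs hbcW hodeW
      intro x hx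
      have := hkey x hx
      simpa using this
end
end

section
/- Let z be an even eigenfunction at level n with eigenvalue Λ, and set c_j = (−1)^j (L^{2n−2j−2}(Λ)z)(0) for 0 ≤ j ≤ n−p−1. Then for every integer k with 0 ≤ k ≤ n−p−1 and every x ∈ [−1,1]: (−1)^k (L^{2n−2k−2}(Λ)z)(x) = Σ_{j=0}^{k} c_j · x^{2(k−j)}/(2(k−j))!. -/
noncomputable section

/-- `⟨f g⟩ = ∫_{−1}^{1} f x * g x dx`. -/
def ip (f g : ℝ → ℝ) : ℝ := ∫ x in (-1:ℝ)..1, f x * g x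

/-- `h_n^k = (−1)^k L^{2n−2k−2}(Λ) z` for `k ≥ 0`, and `0` for `k < 0`. -/
def hfun (p n : ℕ) (Λ : ℝ) (z : ℝ → ℝ) (k : ℤ) : ℝ → ℝ :=
  if k < 0 then 0 else fun x => (-1 : ℝ) ^ k.toNat * Lop p (n - k.toNat - 1) Λ z x


private def Qm (e : ℕ) : ℝ → ℝ := fun x => x ^ e / e.factorial

private lemma Qm_diff (e : ℕ) : Differentiable ℝ (Qm e) :=
  (differentiable_pow e).div_const _

private lemma Qm_deriv (e : ℕ) : deriv (Qm (e + 1)) = Qm e := by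
  funext x
  unfold Qm
  rw [deriv_div_const, deriv_pow_field, Nat.factorial_succ, Nat.cast_mul]
  rw [Nat.add_sub_cancel, mul_div_mul_left _ _ (by positivity : ((e+1:ℕ):ℝ) ≠ 0)]

private lemma Qm_zero_eval (e : ℕ) (he : e ≠ 0) : Qm e 0 = 0 := by
  simp [Qm, zero_pow he]

private lemma deriv_sum_Qm (c : ℕ → ℝ) (m : ℕ) (e : ℕ → ℕ) :
    deriv (fun x => ∑ j ∈ Finset.range m, c j * Qm (e j + 1) x)
      = fun x => ∑ j ∈ Finset.range m, c j * Qm (e j) x := by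
  funext x
  rw [deriv_fun_sum (fun j _ => ((Qm_diff _) x).const_mul _)]
  exact Finset.sum_congr rfl fun j _ => by
    rw [deriv_const_mul _ ((Qm_diff _) x), Qm_deriv]

private lemma const_on_Icc (f : ℝ → ℝ) (hf : Differentiable ℝ f)
    (h : ∀ x ∈ Set.Icc (-1:ℝ) 1, deriv f x = 0) :
    ∀ x ∈ Set.Icc (-1:ℝ) 1, f x = f 0 := by
  have hu : UniqueDiffOn ℝ (Set.Icc (-1:ℝ) 1) := uniqueDiffOn_Icc (by norm_num)
  have key : ∀ x ∈ Set.Icc (-1:ℝ) 1, f x = f (-1) := by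
    apply constant_of_derivWithin_zero hf.differentiableOn
    intro x hx
    rw [(hf x).derivWithin (hu x (Set.Ico_subset_Icc_self hx))]
    exact h x (Set.Ico_subset_Icc_self hx)
  intro x hx
  rw [key x hx, key 0 (by norm_num)]

private lemma zero_on_Icc (f : ℝ → ℝ) (hf : Differentiable ℝ f)
    (hf' : Differentiable ℝ (deriv f))
    (h2 : ∀ x ∈ Set.Icc (-1:ℝ) 1, deriv (deriv f) x = 0)
    (h1 : deriv f 0 = 0) (h0 : f 0 = 0) :
    ∀ x ∈ Set.Icc (-1:ℝ) 1, f x = 0 := by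
  have hD : ∀ x ∈ Set.Icc (-1:ℝ) 1, deriv f x = 0 := by
    intro x hx; rw [const_on_Icc (deriv f) hf' h2 x hx, h1]
  intro x hx; rw [const_on_Icc f hf hD x hx, h0]

private lemma key_lemma (p n : ℕ) (hp : 1 ≤ p) (hpn : p < n)
    (Λ : ℝ) (z : ℝ → ℝ) (hz : EvenEig p n Λ z)
    (c : ℕ → ℝ) (hc : ∀ j ≤ n - p - 1, c j = (-1 : ℝ) ^ j * Lop p (n - j - 1) Λ z 0) :
    ∀ k, k ≤ n - p - 1 → ∀ x ∈ Set.Icc (-1:ℝ) 1,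
      (-1 : ℝ) ^ k * Lop p (n - k - 1) Λ z x
        = ∑ j ∈ Finset.range (k + 1), c j * Qm (2 * (k - j)) x := by
  have hcd : ContDiff ℝ (⊤ : ℕ∞) z := hz.1.1
  have hdz : ∀ m, Differentiable ℝ (iteratedDeriv m z) := fun m =>
    hcd.differentiable_iteratedDeriv m (by exact_mod_cast lt_top_iff_ne_top.2 (by simp))
  have heven : ∀ x, z (-x) = z x := hz.2.2.1
  have hIeven : ∀ (m : ℕ) (x : ℝ), iteratedDeriv (2*m) z (-x) = iteratedDeriv (2*m) z x := by
    intro m x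
    have h := iteratedDeriv_comp_neg (2*m) z x
    rw [show (fun y => z (-y)) = z from funext heven] at h
    simpa [pow_mul] using h.symm
  have hLeven : ∀ (m : ℕ) (x : ℝ), Lop p m Λ z (-x) = Lop p m Λ z x := by
    intro m x
    unfold Lop
    rw [show 2*m - 2*p = 2*(m-p) from by omega, hIeven, hIeven]
  have hLdiff : ∀ m, Differentiable ℝ (Lop p m Λ z) := fun m =>
    ((hdz _).const_mul _).sub ((hdz _).const_mul _)
  have hgen : ∀ (a b : ℝ) (q r : ℕ),
      deriv (fun x => a * iteratedDeriv q z x - b * iteratedDeriv r z x)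
        = fun x => a * iteratedDeriv (q+1) z x - b * iteratedDeriv (r+1) z x := by
    intro a b q r; funext x
    rw [deriv_fun_sub (((hdz _).const_mul _) x) (((hdz _).const_mul _) x),
      deriv_const_mul _ ((hdz _) x), deriv_const_mul _ ((hdz _) x),
      iteratedDeriv_succ, iteratedDeriv_succ]
  have hLd1 : ∀ m, deriv (Lop p m Λ z) = fun x =>
      (-1:ℝ)^m * iteratedDeriv (2*m+1) z x
        - Λ*(-1:ℝ)^(m-p) * iteratedDeriv (2*m-2*p+1) z x := by
    intro m
    unfold Lop
    exact hgen _ _ _ _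
  have hLd1diff : ∀ m, Differentiable ℝ (deriv (Lop p m Λ z)) := by
    intro m; rw [hLd1]
    exact ((hdz _).const_mul _).sub ((hdz _).const_mul _)
  have hLd2 : ∀ m, p ≤ m → deriv (deriv (Lop p m Λ z)) = fun x => - Lop p (m+1) Λ z x := by
    intro m hm; funext x
    rw [hLd1, hgen]
    unfold Lop
    rw [show 2*(m+1) = 2*m+1+1 from by ring, show 2*m+1+1 - 2*p = 2*m-2*p+1+1 from by omega,
      show (m+1) - p = (m-p)+1 from by omega, pow_succ, pow_succ]
    ring
  have hL0 : ∀ m, deriv (Lop p m Λ z) 0 = 0 := by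
    intro m
    have h := deriv_comp_neg (Lop p m Λ z) 0
    rw [show (fun x => Lop p m Λ z (-x)) = Lop p m Λ z from funext (hLeven m)] at h
    rw [neg_zero] at h
    linarith
  -- P facts
  set P : ℕ → ℝ → ℝ := fun k x => ∑ j ∈ Finset.range (k+1), c j * Qm (2*(k-j)) x with hP
  have hPsplit : ∀ k : ℕ, P k = fun x =>
      (∑ j ∈ Finset.range k, c j * Qm (2*(k-j)-1+1) x) + c k := by
    intro k; funext x
    show (∑ j ∈ Finset.range (k+1), c j * Qm (2*(k-j)) x) = _
    rw [Finset.sum_range_succ]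
    congr 1
    · exact Finset.sum_congr rfl fun j hj => by
        have h2 : 2*(k-j)-1+1 = 2*(k-j) := by have := Finset.mem_range.1 hj; omega
        rw [h2]
    · simp [Qm]
  have hPdiff : ∀ k, Differentiable ℝ (P k) := by
    intro k; rw [hP]
    exact Differentiable.fun_sum fun j _ => (Qm_diff _).const_mul _
  have hPderiv : ∀ k, deriv (P k)
      = fun x => ∑ j ∈ Finset.range k, c j * Qm (2*(k-j)-1) x := by
    intro k
    rw [hPsplit k]
    funext x
    rw [deriv_add_const]
    exact congrFun (deriv_sum_Qm c k _) x
  have hPderivdiff : ∀ k, Differentiable ℝ (deriv (P k)) := by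
    intro k; rw [hPderiv]
    exact Differentiable.fun_sum fun j _ => (Qm_diff _).const_mul _
  have hP0 : ∀ k, P k 0 = c k := by
    intro k
    rw [hPsplit k]
    beta_reduce
    rw [Finset.sum_eq_zero, zero_add]
    intro j hj
    rw [Qm_zero_eval _ (by omega), mul_zero]
  have hPd0 : ∀ k, deriv (P k) 0 = 0 := by
    intro k
    rw [hPderiv k]
    apply Finset.sum_eq_zero
    intro j hj
    have := Finset.mem_range.1 hj
    rw [Qm_zero_eval _ (by omega), mul_zero]
  -- main induction
  intro k
  induction k with
  | zero =>
    intro hk x hx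
    have hD := zero_on_Icc (fun x => (-1:ℝ)^0 * Lop p (n-0-1) Λ z x - P 0 x)
      (((hLdiff _).const_mul _).sub (hPdiff 0))
      ?_ ?_ ?_ ?_
    · have := hD x hx
      rw [sub_eq_zero] at this
      exact this
    · have hder : deriv (fun x => (-1:ℝ)^0 * Lop p (n-0-1) Λ z x - P 0 x)
          = fun x => (-1:ℝ)^0 * deriv (Lop p (n-0-1) Λ z) x - deriv (P 0) x := by
        funext x
        rw [deriv_fun_sub (((hLdiff _).const_mul _) x) ((hPdiff 0) x),
          deriv_const_mul _ ((hLdiff _) x)]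
      rw [hder]
      exact (((hLd1diff _).const_mul _)).sub (hPderivdiff 0)
    · intro x hx
      have hder : deriv (fun x => (-1:ℝ)^0 * Lop p (n-0-1) Λ z x - P 0 x)
          = fun x => (-1:ℝ)^0 * deriv (Lop p (n-0-1) Λ z) x - deriv (P 0) x := by
        funext x
        rw [deriv_fun_sub (((hLdiff _).const_mul _) x) ((hPdiff 0) x),
          deriv_const_mul _ ((hLdiff _) x)]
      rw [hder]
      rw [deriv_fun_sub (((hLd1diff _).const_mul _) x) ((hPderivdiff _) x),
        deriv_const_mul _ ((hLd1diff _) x)]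
      rw [hLd2 _ (by omega), hPderiv 0]
      simp only [Finset.range_zero, Finset.sum_empty]
      have hn1 : n - 0 - 1 + 1 = n := by omega
      rw [hn1, hz.2.2.2 x hx]
      simp
    · have hder : deriv (fun x => (-1:ℝ)^0 * Lop p (n-0-1) Λ z x - P 0 x)
          = fun x => (-1:ℝ)^0 * deriv (Lop p (n-0-1) Λ z) x - deriv (P 0) x := by
        funext x
        rw [deriv_fun_sub (((hLdiff _).const_mul _) x) ((hPdiff 0) x),
          deriv_const_mul _ ((hLdiff _) x)]
      rw [hder]
      beta_reduce
      rw [hL0, hPd0]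
      ring
    · beta_reduce
      rw [hP0, hc 0 hk]
      ring
  | succ k ih =>
    intro hk x hx
    have ihk := ih (by omega)
    have hD := zero_on_Icc (fun x => (-1:ℝ)^(k+1) * Lop p (n-(k+1)-1) Λ z x - P (k+1) x)
      (((hLdiff _).const_mul _).sub (hPdiff (k+1)))
      ?_ ?_ ?_ ?_
    · have := hD x hx
      rw [sub_eq_zero] at this
      exact this
    · have hder : deriv (fun x => (-1:ℝ)^(k+1) * Lop p (n-(k+1)-1) Λ z x - P (k+1) x)
          = fun x => (-1:ℝ)^(k+1) * deriv (Lop p (n-(k+1)-1) Λ z) x - deriv (P (k+1)) x := by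
        funext x
        rw [deriv_fun_sub (((hLdiff _).const_mul _) x) ((hPdiff _) x),
          deriv_const_mul _ ((hLdiff _) x)]
      rw [hder]
      exact (((hLd1diff _).const_mul _)).sub (hPderivdiff _)
    · intro x hx
      have hder : deriv (fun x => (-1:ℝ)^(k+1) * Lop p (n-(k+1)-1) Λ z x - P (k+1) x)
          = fun x => (-1:ℝ)^(k+1) * deriv (Lop p (n-(k+1)-1) Λ z) x - deriv (P (k+1)) x := by
        funext x
        rw [deriv_fun_sub (((hLdiff _).const_mul _) x) ((hPdiff _) x),
          deriv_const_mul _ ((hLdiff _) x)]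
      rw [hder]
      rw [deriv_fun_sub (((hLd1diff _).const_mul _) x) ((hPderivdiff _) x),
        deriv_const_mul _ ((hLd1diff _) x)]
      rw [hLd2 _ (by omega)]
      -- second derivative of P (k+1)
      have hPd2 : deriv (deriv (P (k+1))) x = P k x := by
        rw [hPderiv (k+1)]
        have hre : (fun x => ∑ j ∈ Finset.range (k+1), c j * Qm (2*(k+1-j)-1) x)
            = fun x => ∑ j ∈ Finset.range (k+1), c j * Qm (2*(k-j)+1) x := by
          funext y
          exact Finset.sum_congr rfl fun j hj => by
            rw [show 2*(k+1-j)-1 = 2*(k-j)+1 from by have := Finset.mem_range.1 hj; omega]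
        rw [hre, deriv_sum_Qm c (k+1) (fun j => 2*(k-j)), hP]
      rw [hPd2]
      beta_reduce
      have hn1 : n - (k+1) - 1 + 1 = n - k - 1 := by omega
      rw [hn1]
      have hPkx : P k x = (-1:ℝ)^k * Lop p (n-k-1) Λ z x := (ihk x hx).symm
      rw [hPkx]
      ring
    · have hder : deriv (fun x => (-1:ℝ)^(k+1) * Lop p (n-(k+1)-1) Λ z x - P (k+1) x)
          = fun x => (-1:ℝ)^(k+1) * deriv (Lop p (n-(k+1)-1) Λ z) x - deriv (P (k+1)) x := by
        funext x
        rw [deriv_fun_sub (((hLdiff _).const_mul _) x) ((hPdiff _) x),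
          deriv_const_mul _ ((hLdiff _) x)]
      rw [hder]
      beta_reduce
      rw [hL0, hPd0]
      ring
    · beta_reduce
      rw [hP0, hc (k+1) hk]
      ring

theorem stmt11 (p n : ℕ) (hp : 1 ≤ p) (hpn : p < n)
    (Λ : ℝ) (z : ℝ → ℝ) (hz : EvenEig p n Λ z)
    (c : ℕ → ℝ) (hc : ∀ j ≤ n - p - 1, c j = (-1 : ℝ) ^ j * Lop p (n - j - 1) Λ z 0)
    (k : ℕ) (hk : k ≤ n - p - 1) :
    ∀ x ∈ Set.Icc (-1:ℝ) 1,
      (-1 : ℝ) ^ k * Lop p (n - k - 1) Λ z x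
        = ∑ j ∈ Finset.range (k + 1),
            c j * x ^ (2 * (k - j)) / (Nat.factorial (2 * (k - j))) := by
  intro x hx
  rw [key_lemma p n hp hpn Λ z hz c hc k hk x hx]
  exact Finset.sum_congr rfl fun j _ => by rw [Qm]; ring
end
end

section
/- Let z be an even eigenfunction at level n with eigenvalue Λ > 0, set λ² = Λ^{1/p}, and define h^k = (−1)^k L^{2n−2k−2}(Λ)z for integers k ≥ 0 and h^{−1} = 0. Then for every integer k with 0 ≤ k ≤ n−p−1: (−1)^{k−1}⟨z·h^{k−1}⟩ − (−1)^k λ² ⟨z·h^k⟩ > 0. -/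
noncomputable section

open intervalIntegral MeasureTheory Set

namespace S13
variable {z : ℝ → ℝ} {n : ℕ}

/-- `II z j = ∫ (z⁽ʲ⁾)²`. -/
def II (z : ℝ → ℝ) (j : ℕ) : ℝ := ∫ x in (-1:ℝ)..1, iteratedDeriv j z x * iteratedDeriv j z x

lemma contD (hsm : ContDiff ℝ (⊤ : ℕ∞) z) (j : ℕ) : Continuous (iteratedDeriv j z) :=
  hsm.continuous_iteratedDeriv j (by exact_mod_cast le_top)

lemma hasDerivD (hsm : ContDiff ℝ (⊤ : ℕ∞) z) (j : ℕ) (x : ℝ) :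
    HasDerivAt (iteratedDeriv j z) (iteratedDeriv (j+1) z x) x := by
  have := ((hsm.differentiable_iteratedDeriv j
    (by exact_mod_cast lt_top_iff_ne_top.2 (by simp))) x).hasDerivAt
  rwa [iteratedDeriv_succ]

lemma intD (hsm : ContDiff ℝ (⊤ : ℕ∞) z) (j l : ℕ) :
    IntervalIntegrable (fun x => iteratedDeriv j z x * iteratedDeriv l z x) volume (-1:ℝ) 1 :=
  ((contD hsm j).mul (contD hsm l)).intervalIntegrable _ _

lemma sq1 (a : ℕ) : ((-1:ℝ)^a) * ((-1:ℝ)^a) = 1 := by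
  rw [← pow_add]
  exact Even.neg_one_pow ⟨a, rfl⟩

lemma key1 (hsm : ContDiff ℝ (⊤ : ℕ∞) z)
    (hbd : ∀ j < n, iteratedDeriv j z (-1) = 0 ∧ iteratedDeriv j z 1 = 0)
    (a b : ℕ) (ha : a < n) :
    (∫ x in (-1:ℝ)..1, iteratedDeriv a z x * iteratedDeriv (b+1) z x)
      = - ∫ x in (-1:ℝ)..1, iteratedDeriv (a+1) z x * iteratedDeriv b z x := by
  rw [intervalIntegral.integral_mul_deriv_eq_deriv_mul
      (fun x _ => hasDerivD hsm a x) (fun x _ => hasDerivD hsm b x)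
      ((contD hsm (a+1)).intervalIntegrable _ _) ((contD hsm (b+1)).intervalIntegrable _ _)]
  rw [(hbd a ha).1, (hbd a ha).2]
  ring

lemma move (hsm : ContDiff ℝ (⊤ : ℕ∞) z)
    (hbd : ∀ j < n, iteratedDeriv j z (-1) = 0 ∧ iteratedDeriv j z 1 = 0)
    (t : ℕ) : ∀ a b : ℕ, a + t ≤ n →
    (∫ x in (-1:ℝ)..1, iteratedDeriv a z x * iteratedDeriv (b+t) z x)
      = (-1:ℝ)^t * ∫ x in (-1:ℝ)..1, iteratedDeriv (a+t) z x * iteratedDeriv b z x := by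
  induction t with
  | zero => intro a b _; simp
  | succ t ih =>
    intro a b h
    have h1 : b + (t+1) = (b+1) + t := by omega
    rw [h1, ih a (b+1) (by omega), key1 hsm hbd (a+t) b (by omega)]
    have h2 : a + t + 1 = a + (t+1) := by omega
    rw [h2]; ring

lemma pairing (hsm : ContDiff ℝ (⊤ : ℕ∞) z)
    (hbd : ∀ j < n, iteratedDeriv j z (-1) = 0 ∧ iteratedDeriv j z 1 = 0)
    (m : ℕ) (hm : m ≤ n) :
    (∫ x in (-1:ℝ)..1, z x * iteratedDeriv (2*m) z x) = (-1:ℝ)^m * II z m := by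
  have h := move hsm hbd m 0 m (by omega)
  simp only [iteratedDeriv_zero, zero_add] at h
  rw [two_mul]
  exact h

lemma cross (hsm : ContDiff ℝ (⊤ : ℕ∞) z)
    (hbd : ∀ j < n, iteratedDeriv j z (-1) = 0 ∧ iteratedDeriv j z 1 = 0)
    (j : ℕ) (hj : j + 1 ≤ n) :
    (∫ x in (-1:ℝ)..1, iteratedDeriv j z x * iteratedDeriv (j+2) z x) = - II z (j+1) := by
  have h := move hsm hbd 1 j (j+1) (by omega)
  simpa [II] using h

lemma Qval (hsm : ContDiff ℝ (⊤ : ℕ∞) z)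
    (hbd : ∀ j < n, iteratedDeriv j z (-1) = 0 ∧ iteratedDeriv j z 1 = 0)
    (lam2 : ℝ) (j : ℕ) (hj : j + 2 ≤ n) :
    (∫ x in (-1:ℝ)..1, (iteratedDeriv (j+2) z x + lam2 * iteratedDeriv j z x)^2)
      = II z (j+2) - 2*lam2*II z (j+1) + lam2^2 * II z j := by
  have h1 : ∀ x : ℝ, (iteratedDeriv (j+2) z x + lam2 * iteratedDeriv j z x)^2
      = iteratedDeriv (j+2) z x * iteratedDeriv (j+2) z x
        + ((2*lam2) * (iteratedDeriv j z x * iteratedDeriv (j+2) z x)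
          + (lam2^2) * (iteratedDeriv j z x * iteratedDeriv j z x)) := by
    intro x; ring
  simp only [h1]
  rw [intervalIntegral.integral_add (intD hsm (j+2) (j+2))
      (((intD hsm j (j+2)).const_mul _).add ((intD hsm j j).const_mul _)),
    intervalIntegral.integral_add ((intD hsm j (j+2)).const_mul _)
      ((intD hsm j j).const_mul _),
    intervalIntegral.integral_const_mul, intervalIntegral.integral_const_mul,
    cross hsm hbd j (by omega)]
  show II z (j+2) + (2*lam2 * -II z (j+1) + lam2^2 * II z j) = _
  ring

lemma constOn (hsm : ContDiff ℝ (⊤ : ℕ∞) z) (i : ℕ)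
    (h0 : ∀ x ∈ Icc (-1:ℝ) 1, iteratedDeriv (i+1) z x = 0) :
    ∀ x ∈ Icc (-1:ℝ) 1, iteratedDeriv i z x = iteratedDeriv i z (-1) := by
  apply constant_of_has_deriv_right_zero (contD hsm i).continuousOn
  intro x hx
  have h := (hasDerivD hsm i x).hasDerivWithinAt (s := Ici x)
  rwa [h0 x (Ico_subset_Icc_self hx)] at h

lemma zdown (hsm : ContDiff ℝ (⊤ : ℕ∞) z)
    (hbd : ∀ j < n, iteratedDeriv j z (-1) = 0 ∧ iteratedDeriv j z 1 = 0) :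
    ∀ i, i ≤ n → (∀ x ∈ Icc (-1:ℝ) 1, iteratedDeriv i z x = 0) →
    ∀ x ∈ Icc (-1:ℝ) 1, z x = 0 := by
  intro i
  induction i with
  | zero => intro _ h x hx; simpa using h x hx
  | succ i ih =>
    intro hin h
    apply ih (by omega)
    intro x hx
    rw [constOn hsm i h x hx, (hbd i (by omega)).1]

lemma energy (hsm : ContDiff ℝ (⊤ : ℕ∞) z)
    (hbd : ∀ j < n, iteratedDeriv j z (-1) = 0 ∧ iteratedDeriv j z 1 = 0)
    {lam2 : ℝ} (hl : 0 < lam2) (j : ℕ) (hj : j + 2 ≤ n)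
    (h0 : ∀ x ∈ Icc (-1:ℝ) 1, iteratedDeriv (j+2) z x + lam2 * iteratedDeriv j z x = 0) :
    ∀ x ∈ Icc (-1:ℝ) 1, iteratedDeriv j z x = 0 := by
  set E : ℝ → ℝ := fun x => lam2 * (iteratedDeriv j z x * iteratedDeriv j z x)
      + iteratedDeriv (j+1) z x * iteratedDeriv (j+1) z x with hEdef
  have hE : ∀ x ∈ Icc (-1:ℝ) 1, E x = E (-1) := by
    apply constant_of_has_deriv_right_zero
    · exact ((continuous_const.mul ((contD hsm j).mul (contD hsm j))).add
        ((contD hsm (j+1)).mul (contD hsm (j+1)))).continuousOn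
    · intro x hx
      have hv := hasDerivD hsm j x
      have hv' := hasDerivD hsm (j+1) x
      have hE' := ((hv.mul hv).const_mul lam2).add (hv'.mul hv')
      have hw : iteratedDeriv (j+2) z x = - (lam2 * iteratedDeriv j z x) := by
        have := h0 x (Ico_subset_Icc_self hx); linarith
      have hval : lam2 * (iteratedDeriv (j+1) z x * iteratedDeriv j z x
            + iteratedDeriv j z x * iteratedDeriv (j+1) z x)
          + (iteratedDeriv (j+2) z x * iteratedDeriv (j+1) z x
            + iteratedDeriv (j+1) z x * iteratedDeriv (j+2) z x) = 0 := by
        rw [hw]; ring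
      rw [hval] at hE'
      exact hE'.hasDerivWithinAt
  have hEm : E (-1) = 0 := by
    have h1 := (hbd j (by omega)).1
    have h2 := (hbd (j+1) (by omega)).1
    simp [hEdef, h1, h2]
  intro x hx
  have h := hE x hx
  rw [hEm] at h
  simp only [hEdef] at h
  have hvv : iteratedDeriv j z x * iteratedDeriv j z x = 0 := by
    have h1 := mul_self_nonneg (iteratedDeriv j z x)
    have h2 := mul_self_nonneg (iteratedDeriv (j+1) z x)
    nlinarith
  exact mul_self_eq_zero.mp hvv

lemma Qpos (hsm : ContDiff ℝ (⊤ : ℕ∞) z)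
    (hbd : ∀ j < n, iteratedDeriv j z (-1) = 0 ∧ iteratedDeriv j z 1 = 0)
    (hnz : ∃ x ∈ Icc (-1:ℝ) 1, z x ≠ 0) {lam2 : ℝ} (hl : 0 < lam2)
    (j : ℕ) (hj : j + 2 ≤ n) :
    0 < ∫ x in (-1:ℝ)..1, (iteratedDeriv (j+2) z x + lam2 * iteratedDeriv j z x)^2 := by
  apply intervalIntegral.integral_pos (by norm_num)
  · exact (((contD hsm (j+2)).add (continuous_const.mul (contD hsm j))).pow 2).continuousOn
  · intro x _; positivity
  · by_contra hc
    push_neg at hc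
    have h0 : ∀ x ∈ Icc (-1:ℝ) 1, iteratedDeriv (j+2) z x + lam2 * iteratedDeriv j z x = 0 := by
      intro x hx
      have h1 := hc x hx
      nlinarith [sq_nonneg (iteratedDeriv (j+2) z x + lam2 * iteratedDeriv j z x)]
    obtain ⟨x, hx, hzx⟩ := hnz
    exact hzx (zdown hsm hbd j (by omega) (energy hsm hbd hl j hj h0) x hx)

/-- One step: `G (s+1) > lam2 * G s`. -/
lemma step (hsm : ContDiff ℝ (⊤ : ℕ∞) z)
    (hbd : ∀ j < n, iteratedDeriv j z (-1) = 0 ∧ iteratedDeriv j z 1 = 0)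
    (hnz : ∃ x ∈ Icc (-1:ℝ) 1, z x ≠ 0) {lam2 : ℝ} (hl : 0 < lam2)
    (s : ℕ) (hs : s + 2 ≤ n) :
    lam2 * (II z (s+1) - lam2 * II z s) < II z (s+2) - lam2 * II z (s+1) := by
  have hQ := Qpos hsm hbd hnz hl s hs
  rw [Qval hsm hbd lam2 s hs] at hQ
  nlinarith [hQ]

lemma chain (hsm : ContDiff ℝ (⊤ : ℕ∞) z)
    (hbd : ∀ j < n, iteratedDeriv j z (-1) = 0 ∧ iteratedDeriv j z 1 = 0)
    (hnz : ∃ x ∈ Icc (-1:ℝ) 1, z x ≠ 0) {lam2 : ℝ} (hl : 0 < lam2)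
    (t : ℕ) (ht : 1 ≤ t) : ∀ s : ℕ, s + t + 1 ≤ n →
    lam2^t * (II z (s+1) - lam2 * II z s) < II z (s+t+1) - lam2 * II z (s+t) := by
  induction t, ht using Nat.le_induction with
  | base =>
    intro s h
    have := step hsm hbd hnz hl s (by omega)
    simpa [pow_one] using this
  | succ t ht ih =>
    intro s h
    have h1 := ih (s+1) (by omega)
    have h2 := step hsm hbd hnz hl s (by omega)
    have h3 : lam2^t * (lam2 * (II z (s+1) - lam2 * II z s))
        < lam2^t * (II z (s+2) - lam2 * II z (s+1)) :=
      mul_lt_mul_of_pos_left h2 (pow_pos hl t)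
    have e1 : s+1+1 = s+2 := by omega
    have e2 : s+1+t+1 = s+(t+1)+1 := by omega
    have e3 : s+1+t = s+(t+1) := by omega
    rw [e1, e2, e3] at h1
    calc lam2^(t+1) * (II z (s+1) - lam2 * II z s)
        = lam2^t * (lam2 * (II z (s+1) - lam2 * II z s)) := by ring
      _ < lam2^t * (II z (s+2) - lam2 * II z (s+1)) := h3
      _ < II z (s+(t+1)+1) - lam2 * II z (s+(t+1)) := h1

/-- `∫ z ⋅ L^{2m}(Λ) z = II m − Λ II (m−p)`. -/
lemma ipL (hsm : ContDiff ℝ (⊤ : ℕ∞) z)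
    (hbd : ∀ j < n, iteratedDeriv j z (-1) = 0 ∧ iteratedDeriv j z 1 = 0)
    (p : ℕ) (Λ : ℝ) (m : ℕ) (hm : m ≤ n) (hpm : p ≤ m) :
    (∫ x in (-1:ℝ)..1, z x * Lop p m Λ z x) = II z m - Λ * II z (m - p) := by
  have e2 : 2*m - 2*p = 2*(m - p) := by omega
  have h1 : ∀ x : ℝ, z x * Lop p m Λ z x
      = (-1:ℝ)^m * (z x * iteratedDeriv (2*m) z x)
        - (Λ * (-1:ℝ)^(m-p)) * (z x * iteratedDeriv (2*(m-p)) z x) := by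
    intro x; rw [Lop, ← e2]; ring
  simp only [h1]
  have hz0 : z = iteratedDeriv 0 z := iteratedDeriv_zero.symm
  have int1 : IntervalIntegrable (fun x => z x * iteratedDeriv (2*m) z x) volume (-1:ℝ) 1 := by
    rw [hz0]; exact intD hsm 0 (2*m)
  have int2 : IntervalIntegrable (fun x => z x * iteratedDeriv (2*(m-p)) z x) volume (-1:ℝ) 1 := by
    rw [hz0]; exact intD hsm 0 (2*(m-p))
  rw [intervalIntegral.integral_sub (int1.const_mul _) (int2.const_mul _),
    intervalIntegral.integral_const_mul, intervalIntegral.integral_const_mul,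
    pairing hsm hbd m hm, pairing hsm hbd (m-p) (by omega)]
  rw [show (-1:ℝ)^m * ((-1:ℝ)^m * II z m) = ((-1:ℝ)^m * (-1:ℝ)^m) * II z m by ring, sq1,
    show Λ * (-1:ℝ)^(m-p) * ((-1:ℝ)^(m-p) * II z (m-p))
      = Λ * (((-1:ℝ)^(m-p)) * ((-1:ℝ)^(m-p))) * II z (m-p) by ring, sq1]
  ring

/-- Value of `ip z (hfun k)` for natural `k`. -/
lemma ip_hfun (hsm : ContDiff ℝ (⊤ : ℕ∞) z)
    (hbd : ∀ j < n, iteratedDeriv j z (-1) = 0 ∧ iteratedDeriv j z 1 = 0)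
    (p : ℕ) (Λ : ℝ) (k : ℕ) (hm : n - k - 1 ≤ n) (hpm : p ≤ n - k - 1) :
    ip z (hfun p n Λ z (k:ℤ))
      = (-1:ℝ)^k * (II z (n-k-1) - Λ * II z (n-k-1-p)) := by
  have h0 : hfun p n Λ z (k:ℤ) = fun x => (-1:ℝ)^k * Lop p (n-k-1) Λ z x := by
    rw [hfun, if_neg (by omega)]
    simp
  rw [ip, h0]
  have h1 : ∀ x : ℝ, z x * ((-1:ℝ)^k * Lop p (n-k-1) Λ z x)
      = (-1:ℝ)^k * (z x * Lop p (n-k-1) Λ z x) := fun x => by ring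
  simp only [h1]
  rw [intervalIntegral.integral_const_mul, ipL hsm hbd p Λ (n-k-1) hm hpm]

end S13
theorem stmt13 (p n : ℕ) (hp : 1 ≤ p) (hpn : p < n)
    (Λ : ℝ) (hΛ : 0 < Λ) (z : ℝ → ℝ) (hz : EvenEig p n Λ z)
    (lam2 : ℝ) (hlam2 : lam2 = Λ ^ ((1 : ℝ) / p))
    (k : ℕ) (hk : k ≤ n - p - 1) :
    (-1 : ℝ) ^ ((k : ℤ) - 1) * ip z (hfun p n Λ z ((k : ℤ) - 1))
        - (-1 : ℝ) ^ k * lam2 * ip z (hfun p n Λ z (k : ℤ)) > 0 := by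
  obtain ⟨⟨hsm, hbd⟩, hnz, _, heig⟩ := hz
  have hl : 0 < lam2 := by rw [hlam2]; exact Real.rpow_pos_of_pos hΛ _
  have hΛeq : lam2 ^ p = Λ := by
    rw [hlam2, ← Real.rpow_natCast (Λ ^ ((1:ℝ)/(p:ℝ))) p, ← Real.rpow_mul hΛ.le,
      one_div, inv_mul_cancel₀ (Nat.cast_ne_zero.mpr (by omega) : (p:ℝ) ≠ 0), Real.rpow_one]
  obtain ⟨s, hs⟩ : ∃ s, n = s + p + k + 1 := ⟨n - p - k - 1, by omega⟩
  have hchain := S13.chain hsm hbd hnz hl p hp s (by omega)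
  have hterm2 : ip z (hfun p n Λ z (k:ℤ))
      = (-1:ℝ)^k * (S13.II z (s+p) - Λ * S13.II z s) := by
    rw [S13.ip_hfun hsm hbd p Λ k (by omega) (by omega),
      show n-k-1 = s+p by omega, show s+p-p = s by omega]
  have hterm1 : (-1:ℝ)^((k:ℤ)-1) * ip z (hfun p n Λ z ((k:ℤ)-1))
      = S13.II z (s+p+1) - Λ * S13.II z (s+1) := by
    cases k with
    | zero =>
      have h0 : hfun p n Λ z (((0:ℕ):ℤ)-1) = 0 := by rw [hfun, if_pos (by norm_num)]
      have hint : (∫ x in (-1:ℝ)..1, z x * Lop p n Λ z x) = 0 := by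
        have hcg : Set.EqOn (fun x => z x * Lop p n Λ z x) (fun _ => (0:ℝ))
            (Set.uIcc (-1:ℝ) 1) := by
          intro x hx
          rw [Set.uIcc_of_le (by norm_num : (-1:ℝ) ≤ 1)] at hx
          simp [heig x hx]
        rw [intervalIntegral.integral_congr hcg]
        simp
      rw [S13.ipL hsm hbd p Λ n le_rfl (by omega)] at hint
      rw [show n = s+p+1 by omega, show s+p+1-p = s+1 by omega] at hint
      have hip0 : ip z 0 = 0 := by simp [ip]
      rw [h0, hip0, mul_zero]
      linarith
    | succ k' =>
      have he : ((k'+1:ℕ):ℤ) - 1 = (k':ℤ) := by push_cast; ring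
      rw [he, zpow_natCast,
        S13.ip_hfun hsm hbd p Λ k' (by omega) (by omega),
        show n-k'-1 = s+p+1 by omega, show s+p+1-p = s+1 by omega,
        show (-1:ℝ)^k' * ((-1:ℝ)^k' * (S13.II z (s+p+1) - Λ * S13.II z (s+1)))
          = ((-1:ℝ)^k' * (-1:ℝ)^k') * (S13.II z (s+p+1) - Λ * S13.II z (s+1)) from by ring,
        S13.sq1, one_mul]
  have hexp : (-1:ℝ)^k * lam2 * ((-1:ℝ)^k * (S13.II z (s+p) - Λ * S13.II z s))
      = lam2 * (S13.II z (s+p) - Λ * S13.II z s) := by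
    rw [show (-1:ℝ)^k * lam2 * ((-1:ℝ)^k * (S13.II z (s+p) - Λ * S13.II z s))
      = ((-1:ℝ)^k * (-1:ℝ)^k) * (lam2 * (S13.II z (s+p) - Λ * S13.II z s)) from by ring,
      S13.sq1, one_mul]
  rw [gt_iff_lt, hterm1, hterm2, hexp]
  have hkey : S13.II z (s+p+1) - Λ * S13.II z (s+1) - lam2 * (S13.II z (s+p) - Λ * S13.II z s)
      = (S13.II z (s+p+1) - lam2 * S13.II z (s+p))
        - lam2^p * (S13.II z (s+1) - lam2 * S13.II z s) := by
    rw [← hΛeq]; ring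
  linarith
end
end
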